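/- arXiv:2406.04877 — 3 statements merged into one kernel-verified Lean document; each statement's English description precedes it below -/
import Mathlib

section
/- Let D_1, D_2, D_3 be directed graphs such that D_1 is a butterfly minor of D_2 and D_2 is a butterfly minor of D_3. Then D_1 is a butterfly minor of D_3. -/
/-!
Common definitions: directed graphs as vertex/edge sets, directed paths and
walks, rays, arborescences, tree-like models and butterfly minors, laced
paths, knit rays, and the shapes (dominated directed rays, stars, combs,
chains of triangles) from the paper.
-/

universe u

/-- A directed graph on an ambient vertex type `V`, given by a set of vertices
and a set of directed edges (ordered pairs of vertices). -/
structure DGraph (V : Type u) where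
  verts : Set V
  edges : Set (V × V)

namespace DGraph

variable {V : Type u}

instance : Union (DGraph V) := ⟨fun G H => ⟨G.verts ∪ H.verts, G.edges ∪ H.edges⟩⟩
instance : Inter (DGraph V) := ⟨fun G H => ⟨G.verts ∩ H.verts, G.edges ∩ H.edges⟩⟩
instance : HasSubset (DGraph V) := ⟨fun H G => H.verts ⊆ G.verts ∧ H.edges ⊆ G.edges⟩
instance : EmptyCollection (DGraph V) := ⟨⟨∅, ∅⟩⟩

/-- The union of a family of directed graphs. -/
def iUnion {ι : Type} (f : ι → DGraph V) : DGraph V :=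
  ⟨⋃ i, (f i).verts, ⋃ i, (f i).edges⟩

/-- The directed graph obtained by reversing the orientation of every edge. -/
def reverse (G : DGraph V) : DGraph V := ⟨G.verts, {e | (e.2, e.1) ∈ G.edges}⟩

/-- The directed graph consisting of a single vertex and no edges. -/
def single (v : V) : DGraph V := ⟨{v}, ∅⟩

/-- Two vertices joined by both directed edges. -/
def linkBoth (a b : V) : DGraph V := ⟨{a, b}, {(a, b), (b, a)}⟩

/-- A directed triangle (directed cycle of length 3) on `a, b, c`. -/
def triangle (a b c : V) : DGraph V := ⟨{a, b, c}, {(a, b), (b, c), (c, a)}⟩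

/-- The directed graph of a list of vertices with its consecutive edges. -/
def ofList (l : List V) : DGraph V := ⟨{v | v ∈ l}, {e | e ∈ l.zip l.tail}⟩

/-- `𝒟(P)` for the (undirected) path `P` given by the list `l`:
the double path on `l`. -/
def doubleOfList (l : List V) : DGraph V := ofList l ∪ (ofList l).reverse

/-- The directed cycle through the vertices of `l` in order. -/
def cycleOfList (l : List V) : DGraph V :=
  ⟨{v | v ∈ l}, {e | e ∈ l.zip (l.tail ++ l.take 1)}⟩

/-- `G` is a directed cycle. -/
def IsDirectedCycle (G : DGraph V) : Prop :=
  ∃ l : List V, l.Nodup ∧ 2 ≤ l.length ∧ G = cycleOfList l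

/-- The out-oriented ray with vertices `f 0, f 1, …`, rooted at `f 0`. -/
def outRay (f : ℕ → V) : DGraph V :=
  ⟨Set.range f, {e | ∃ n, e = (f n, f (n + 1))}⟩

/-- The in-oriented ray with vertices `f 0, f 1, …`, rooted at `f 0`. -/
def inRay (f : ℕ → V) : DGraph V :=
  ⟨Set.range f, {e | ∃ n, e = (f (n + 1), f n)}⟩

/-- `𝒟(R)` for the undirected ray `R` with vertices `f 0, f 1, …`. -/
def doubleRay (f : ℕ → V) : DGraph V := outRay f ∪ inRay f

/-- The dominated directed ray on an out-oriented ray: the out-oriented ray `f`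
rooted at `f 0` together with the edges `(f (n+1), f 0)`. -/
def domOutRay (f : ℕ → V) : DGraph V :=
  ⟨Set.range f, {e | ∃ n, e = (f n, f (n + 1))} ∪ {e | ∃ n, e = (f (n + 1), f 0)}⟩

/-- The dominated directed ray on an in-oriented ray: the in-oriented ray `f`
rooted at `f 0` together with the edges `(f 0, f (n+1))`. -/
def domInRay (f : ℕ → V) : DGraph V :=
  ⟨Set.range f, {e | ∃ n, e = (f (n + 1), f n)} ∪ {e | ∃ n, e = (f 0, f (n + 1))}⟩

/-- `G` is a dominated directed ray. -/
def IsDominatedDirectedRay (G : DGraph V) : Prop :=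
  ∃ f : ℕ → V, Function.Injective f ∧ (G = domOutRay f ∨ G = domInRay f)

/-- The internal vertices of a path or walk given as a list. -/
def internals (l : List V) : List V := l.tail.dropLast

/-- `l` is a directed path in `G`. -/
def IsPath (G : DGraph V) (l : List V) : Prop :=
  l ≠ [] ∧ l.Nodup ∧ (∀ v ∈ l, v ∈ G.verts) ∧ ∀ e ∈ l.zip l.tail, e ∈ G.edges

/-- `l` is a directed path in `G` with startvertex `a` and endvertex `b`. -/
def IsPathFrom (G : DGraph V) (a b : V) (l : List V) : Prop :=
  IsPath G l ∧ l.head? = some a ∧ l.getLast? = some b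

/-- There is a directed `a`–`b` path in `G`. -/
def Reaches (G : DGraph V) (a b : V) : Prop := ∃ l, IsPathFrom G a b l

/-- `G` is strongly connected. -/
def StronglyConnected (G : DGraph V) : Prop :=
  ∀ a ∈ G.verts, ∀ b ∈ G.verts, Reaches G a b

/-- `l` is a directed `X`–`Y` path in `G`: it starts in `X`, ends in `Y` and
has no internal vertex in `X ∪ Y`. -/
def IsXYPath (G : DGraph V) (X Y : Set V) (l : List V) : Prop :=
  IsPath G l ∧ (∃ a ∈ X, l.head? = some a) ∧ (∃ b ∈ Y, l.getLast? = some b) ∧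
    ∀ v ∈ internals l, v ∉ X ∪ Y

/-- `T` is an in-arborescence rooted at `r`: its underlying graph is a tree
and all edges are directed towards the root `r`. -/
def IsInArborescence (T : DGraph V) (r : V) : Prop :=
  r ∈ T.verts ∧ (∀ e ∈ T.edges, e.1 ∈ T.verts ∧ e.2 ∈ T.verts) ∧
  (∀ w, (r, w) ∉ T.edges) ∧ (∀ v ∈ T.verts, v ≠ r → ∃! w, (v, w) ∈ T.edges) ∧
  (∀ v ∈ T.verts, Reaches T v r)

/-- `T` is an out-arborescence rooted at `r`. -/
def IsOutArborescence (T : DGraph V) (r : V) : Prop := IsInArborescence T.reverse r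

/-- `v` is a leaf of the in-arborescence `T` rooted at `r`. -/
def IsLeafOfInArb (T : DGraph V) (r v : V) : Prop :=
  v ∈ T.verts ∧ v ≠ r ∧ ∀ u, (u, v) ∉ T.edges

/-- `v` is a leaf of the out-arborescence `T` rooted at `r`. -/
def IsLeafOfOutArb (T : DGraph V) (r v : V) : Prop := IsLeafOfInArb T.reverse r v

/-- A tree-like model of `H` in `D`; every vertex of `H` is identified with the
common root of the in- and out-arborescence of its branch set. -/
structure TreeLikeModel (D H : DGraph V) where
  bag : V → DGraph V
  tin : V → DGraph V
  tout : V → DGraph V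
  emap : V × V → V × V
  bag_sub : ∀ v ∈ H.verts, bag v ⊆ D
  bag_disjoint : ∀ v ∈ H.verts, ∀ w ∈ H.verts, v ≠ w → (bag v).verts ∩ (bag w).verts = ∅
  bag_eq : ∀ v ∈ H.verts, bag v = tin v ∪ tout v
  tin_arb : ∀ v ∈ H.verts, IsInArborescence (tin v) v
  tout_arb : ∀ v ∈ H.verts, IsOutArborescence (tout v) v
  roots_eq : ∀ v ∈ H.verts, (tin v).verts ∩ (tout v).verts = {v}
  emap_mem : ∀ e ∈ H.edges, emap e ∈ D.edges
  emap_tail : ∀ e ∈ H.edges, (emap e).1 ∈ (tout e.1).verts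
  emap_head : ∀ e ∈ H.edges, (emap e).2 ∈ (tin e.2).verts

/-- `H` is a butterfly minor of `D`. -/
def IsButterflyMinor (D H : DGraph V) : Prop := Nonempty (TreeLikeModel D H)

/-- `G` is a double path (`𝒟(P)` for an undirected path `P`) with endpoints
`a` and `b`. -/
def IsDoublePath (G : DGraph V) (a b : V) : Prop :=
  ∃ l : List V, l.Nodup ∧ l.head? = some a ∧ l.getLast? = some b ∧ G = doubleOfList l

/-- `G = 𝒟(S)` for a subdivided star `S` with infinitely many leaves, with
centre `c` and branches `q n`; `teeth` is the set of leaves of `S`. -/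
def IsDSubdividedStar (G : DGraph V) (teeth : Set V) : Prop :=
  ∃ (c : V) (q : ℕ → List V),
    (∀ n, (q n).Nodup ∧ (q n).head? = some c ∧ 2 ≤ (q n).length) ∧
    (∀ m n, m ≠ n → ∀ v, v ∈ q m → v ∈ q n → v = c) ∧
    G = iUnion (fun n => doubleOfList (q n)) ∧
    teeth = {v | ∃ n, (q n).getLast? = some v}

/-- `G` is obtained from `𝒟(S)` for a subdivided star `S` by replacing the
centre of infinite degree by a dominated directed ray. -/
def IsRayCentreStar (G : DGraph V) (teeth : Set V) : Prop :=
  ∃ (f : ℕ → V) (R : DGraph V) (g : ℕ → V) (q : ℕ → List V),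
    Function.Injective f ∧ (R = domOutRay f ∨ R = domInRay f) ∧
    (∀ n, (q n).Nodup ∧ (q n).head? = some (g n)) ∧
    (∀ n, ∀ v ∈ q n, v ∉ Set.range f) ∧
    (∀ m n, m ≠ n → ∀ v ∈ q m, v ∉ q n) ∧
    G = R ∪ iUnion (fun n => doubleOfList (q n) ∪ linkBoth (f n) (g n)) ∧
    teeth = {v | ∃ n, (q n).getLast? = some v}

/-- `G` is shaped by a star, with set of teeth `teeth`. -/
def IsShapedByStar (G : DGraph V) (teeth : Set V) : Prop :=
  (IsDominatedDirectedRay G ∧ teeth = G.verts) ∨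
  IsDSubdividedStar G teeth ∨ IsRayCentreStar G teeth

/-- `G = 𝒟(C)` for a comb `C` with spine `f`, branches `q n` attached at
`f (α n)`; `teeth` is the set of teeth of `C`. -/
def IsDComb (G : DGraph V) (teeth : Set V) : Prop :=
  ∃ (f : ℕ → V) (α : ℕ → ℕ) (q : ℕ → List V),
    Function.Injective f ∧ Function.Injective α ∧
    (∀ n, (q n).Nodup ∧ (q n).head? = some (f (α n))) ∧
    (∀ n, ∀ v ∈ (q n).tail, v ∉ Set.range f) ∧
    (∀ m n, m ≠ n → ∀ v ∈ q m, v ∉ q n) ∧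
    G = doubleRay f ∪ iUnion (fun n => doubleOfList (q n)) ∧
    teeth = {v | ∃ n, (q n).getLast? = some v}

/-- The double path on `l` together with both edges between `b` and the first
vertex of `l` (empty if `l` is empty). -/
def branchGraph (b : V) (l : List V) : DGraph V :=
  match l with
  | [] => ∅
  | h :: _ => doubleOfList l ∪ linkBoth b h

/-- `G` is obtained from `𝒟(C)` for a comb `C` by replacing each junction of
`C` by a directed cycle of length 3 as described in the paper.  Position `k`
of the spine is replaced by the piece `S k` (a single vertex, or a directed
triangle at junctions), with `L k`, `R k`, `B k` the vertices of `S k` to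
which the left spine part, the right spine part and the branch attach, and
`t n` the tooth of branch `n`. -/
def IsTriangleComb (G : DGraph V) (teeth : Set V) : Prop :=
  ∃ (α : ℕ → ℕ) (q : ℕ → List V) (S : ℕ → DGraph V) (L R B : ℕ → V) (t : ℕ → V),
    Function.Injective α ∧
    (∀ j k, j ≠ k → (S j).verts ∩ (S k).verts = ∅) ∧
    (∀ n, (q n).Nodup) ∧
    (∀ m n, m ≠ n → ∀ v ∈ q m, v ∉ q n) ∧
    (∀ n, ∀ v ∈ q n, ∀ k, v ∉ (S k).verts) ∧
    (∀ k, L k ∈ (S k).verts ∧ R k ∈ (S k).verts ∧ B k ∈ (S k).verts) ∧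
    (∀ k, (¬ ∃ n, α n = k ∧ 1 ≤ k) → ∃ v, S k = single v) ∧
    (∀ n, 1 ≤ α n → ∃ a b c, a ≠ b ∧ b ≠ c ∧ a ≠ c ∧ S (α n) = triangle a b c) ∧
    (∀ n, 1 ≤ α n → q n ≠ [] →
      L (α n) ≠ R (α n) ∧ L (α n) ≠ B (α n) ∧ R (α n) ≠ B (α n)) ∧
    (∀ n, 1 ≤ α n → q n = [] →
      t n ∈ (S (α n)).verts ∧ L (α n) ≠ R (α n) ∧ t n ≠ L (α n) ∧ t n ≠ R (α n)) ∧
    (∀ n, q n ≠ [] → (q n).getLast? = some (t n)) ∧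
    (∀ n, α n = 0 → q n = [] → t n ∈ (S 0).verts) ∧
    G = iUnion S ∪ iUnion (fun k => linkBoth (R k) (L (k + 1))) ∪
        iUnion (fun n => branchGraph (B (α n)) (q n)) ∧
    teeth = Set.range t

/-- `G` is shaped by a comb, with set of teeth `teeth`. -/
def IsShapedByComb (G : DGraph V) (teeth : Set V) : Prop :=
  IsDComb G teeth ∨ IsTriangleComb G teeth

/-- The core of a chain of triangles: triangles `a i, b i, c i` together with
the edges `(a (i+1), a i)` and `(c i, c (i+1))`. -/
def chainCore (a b c : ℕ → V) : DGraph V :=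
  ⟨Set.range a ∪ Set.range b ∪ Set.range c,
   {e | ∃ i, e = (a i, b i) ∨ e = (b i, c i) ∨ e = (c i, a i) ∨
        e = (a (i + 1), a i) ∨ e = (c i, c (i + 1))}⟩

/-- `G` is a chain of triangles with set of teeth `teeth`. -/
def IsChainOfTriangles (G : DGraph V) (teeth : Set V) : Prop :=
  ∃ (a b c : ℕ → V) (q : ℕ → List V),
    (Function.Injective fun p : ℕ × Fin 3 => ![a, b, c] p.2 p.1) ∧
    (∀ i, (q i).Nodup ∧ (q i).head? = some (b i)) ∧
    (∀ i, ∀ v ∈ (q i).tail, ∀ j, v ≠ a j ∧ v ≠ b j ∧ v ≠ c j) ∧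
    (∀ i j, i ≠ j → ∀ v ∈ q i, v ∉ q j) ∧
    G = chainCore a b c ∪ iUnion (fun i => doubleOfList (q i)) ∧
    teeth = {v | ∃ i, (q i).getLast? = some v}

/-- `G` is a subdivided in-star with centre (root) `c` and all edges directed
towards `c`; it has infinitely many leaves and `teeth` is its set of leaves. -/
def IsSubdividedInStar (G : DGraph V) (teeth : Set V) : Prop :=
  ∃ (c : V) (q : ℕ → List V),
    (∀ n, (q n).Nodup ∧ (q n).getLast? = some c ∧ 2 ≤ (q n).length) ∧
    (∀ m n, m ≠ n → ∀ v, v ∈ q m → v ∈ q n → v = c) ∧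
    G = iUnion (fun n => ofList (q n)) ∧
    teeth = {v | ∃ n, (q n).head? = some v}

/-- `G` is a subdivided out-star. -/
def IsSubdividedOutStar (G : DGraph V) (teeth : Set V) : Prop :=
  IsSubdividedInStar G.reverse teeth

/-- `G = 𝒟(K_{1,∞})`. -/
def IsDInfiniteStar (G : DGraph V) : Prop :=
  ∃ (c : V) (g : ℕ → V), Function.Injective g ∧ (∀ n, g n ≠ c) ∧
    G = ⟨insert c (Set.range g), {e | ∃ n, e = (c, g n) ∨ e = (g n, c)}⟩

/-- `G = 𝒟(R)` for an undirected ray `R`. -/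
def IsDoubleRayGraph (G : DGraph V) : Prop :=
  ∃ f : ℕ → V, Function.Injective f ∧ G = doubleRay f

/-- `G` is a subdivision of a dominated directed ray (parallel edges being
collapsed): the ray `f`, its original vertices sitting at the positions
`α n ≥ 1`, and for each `n` a subdivided dominating edge `p n`. -/
def IsSubdivDominatedRay (G : DGraph V) : Prop :=
  (∃ (f : ℕ → V) (α : ℕ → ℕ) (p : ℕ → List V),
    Function.Injective f ∧ StrictMono α ∧ (∀ n, 1 ≤ α n) ∧
    (∀ n, (p n).Nodup ∧ (p n).head? = some (f (α n)) ∧ (p n).getLast? = some (f 0) ∧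
      2 ≤ (p n).length) ∧
    (∀ n, ∀ v ∈ internals (p n), v ∉ Set.range f) ∧
    (∀ m n, m ≠ n → ∀ v ∈ internals (p m), v ∉ p n) ∧
    G = outRay f ∪ iUnion (fun n => ofList (p n))) ∨
  (∃ (f : ℕ → V) (α : ℕ → ℕ) (p : ℕ → List V),
    Function.Injective f ∧ StrictMono α ∧ (∀ n, 1 ≤ α n) ∧
    (∀ n, (p n).Nodup ∧ (p n).head? = some (f 0) ∧ (p n).getLast? = some (f (α n)) ∧
      2 ≤ (p n).length) ∧
    (∀ n, ∀ v ∈ internals (p n), v ∉ Set.range f) ∧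
    (∀ m n, m ≠ n → ∀ v ∈ internals (p m), v ∉ p n) ∧
    G = inRay f ∪ iUnion (fun n => ofList (p n)))

section Laced

variable [DecidableEq V]

/-- The segment of the path `l` from `x` to `y` (inclusive). -/
def seg (l : List V) (x y : V) : List V :=
  (l.drop (l.idxOf x)).take (l.idxOf y + 1 - l.idxOf x)

/-- `x ≤ y` along the path `l`. -/
def leIn (l : List V) (x y : V) : Prop :=
  x ∈ l ∧ y ∈ l ∧ l.idxOf x ≤ l.idxOf y

/-- `x < y` along the path `l`. -/
def ltIn (l : List V) (x y : V) : Prop :=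
  x ∈ l ∧ y ∈ l ∧ l.idxOf x < l.idxOf y

/-- The directed paths `P` and `Q` are laced. -/
def Laced (P Q : List V) : Prop :=
  (∀ v ∈ P, v ∉ Q) ∨
  ∃ (ℓ : ℕ) (x y : ℕ → V), 1 ≤ ℓ ∧
    (∀ i, 1 ≤ i → i ≤ ℓ → leIn P (x i) (y i) ∧ leIn Q (x i) (y i)) ∧
    (∀ i, 1 ≤ i → i < ℓ → ltIn P (y i) (x (i + 1)) ∧ ltIn Q (y (i + 1)) (x i)) ∧
    (∀ i, 1 ≤ i → i ≤ ℓ → seg P (x i) (y i) = seg Q (x i) (y i)) ∧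
    (∀ i, 1 ≤ i → i < ℓ → ∀ v ∈ internals (seg Q (y (i + 1)) (x i)), v ∉ P) ∧
    (∀ v ∈ Q.take (Q.idxOf (x ℓ) + 1), v ∈ P → v = x ℓ) ∧
    (∀ v ∈ Q.drop (Q.idxOf (y 1)), v ∈ P → v = y 1)

end Laced

/-- The out-ray `f` and the in-ray `g` with common root are knit:
`x i = f (p i) = g (p' i)` and `y i = f (q i) = g (q' i)` are the shared
segments, in the orders required in the paper. -/
def Knit (f g : ℕ → V) : Prop :=
  f 0 = g 0 ∧
  ∃ p q p' q' : ℕ → ℕ,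
    (∀ i, 0 < p i ∧ p i ≤ q i ∧ q i < p (i + 1)) ∧
    (∀ i, 0 < q' i ∧ q' i ≤ p' i ∧ p' i < q' (i + 1)) ∧
    (∀ i, q i - p i = p' i - q' i) ∧
    (∀ i, ∀ k ≤ q i - p i, f (p i + k) = g (p' i - k)) ∧
    (∀ i, ∀ m, p' i < m → m < q' (i + 1) → g m ∉ Set.range f) ∧
    (∀ m, 0 < m → m < q' 0 → g m ∉ Set.range f)

section Contract

variable [DecidableEq V]

/-- The map identifying `v` with `u`. -/
def contractFun (u v : V) : V → V := fun x => if x = v then u else x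

/-- Contracting the edge `(u, v)` of `G` onto the vertex `u`. -/
def contractEdge (G : DGraph V) (u v : V) : DGraph V :=
  ⟨contractFun u v '' G.verts,
   {e | e ≠ (u, u) ∧ ∃ e' ∈ G.edges, e = (contractFun u v e'.1, contractFun u v e'.2)}⟩

end Contract

/-- The edge `(u, v)` of `G` is butterfly contractible. -/
def IsButterflyContractibleEdge (G : DGraph V) (u v : V) : Prop :=
  (u, v) ∈ G.edges ∧
  ((∀ w, (u, w) ∈ G.edges → w = v) ∨ (∀ w, (w, v) ∈ G.edges → w = u))

/-- `G` and `H` are isomorphic directed graphs. -/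
def Isom (G H : DGraph V) : Prop :=
  ∃ φ : V → V, Set.BijOn φ G.verts H.verts ∧
    ∀ u ∈ G.verts, ∀ v ∈ G.verts, ((u, v) ∈ G.edges ↔ (φ u, φ v) ∈ H.edges)

end DGraph

/-!
Compose the two models. For a vertex `v` of `D₁`, replace each vertex `w` of the
in-arborescence `T_in^{μ₁(v)}` by the in-arborescence of `μ₂(w)`, extended by a path in the
out-arborescence of `μ₂(w)` from `w` to the tail of `μ₂(e)`, where `e` is the edge of
`T_in^{μ₁(v)}` leaving `w`. Joined by these edges `μ₂(e)`, the pieces form an in-arborescence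
of `D₃` rooted at `v`; out-arborescences arise in the same way after reversing all edges.
Branch sets of distinct vertices of `D₁` lie in the `μ₂`-images of disjoint branch sets of `μ₁`,
and the roots condition of both models pins down the common vertex of the two arborescences.
-/

namespace List

variable {α : Type*} {l : List α} {a b c : α}

theorem mem_zip_tail_iff :
    (a, b) ∈ l.zip l.tail ↔ ∃ (i : ℕ) (h : i + 1 < l.length), l[i] = a ∧ l[i + 1] = b := by
  simp only [mem_iff_getElem, length_zip, length_tail, getElem_zip, getElem_tail,
    Prod.mk.injEq]
  exact ⟨fun ⟨i, _, h⟩ => ⟨i, by omega, h⟩, fun ⟨i, _, h⟩ => ⟨i, by omega, h⟩⟩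

theorem mem_and_mem_of_mem_zip_tail (h : (a, b) ∈ l.zip l.tail) : a ∈ l ∧ b ∈ l :=
  ⟨(of_mem_zip h).1, mem_of_mem_tail (of_mem_zip h).2⟩

theorem Nodup.eq_of_mem_zip_tail (hl : l.Nodup) (hb : (a, b) ∈ l.zip l.tail)
    (hc : (a, c) ∈ l.zip l.tail) : b = c := by
  obtain ⟨i, hi, rfl, rfl⟩ := mem_zip_tail_iff.mp hb
  obtain ⟨j, hj, hij, rfl⟩ := mem_zip_tail_iff.mp hc
  obtain rfl : j = i := hl.getElem_inj_iff.mp hij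
  rfl

theorem Nodup.not_mem_zip_tail_of_getLast? (hl : l.Nodup) (ha : l.getLast? = some a) :
    (a, b) ∉ l.zip l.tail := by
  rintro h
  obtain ⟨i, hi, rfl, -⟩ := mem_zip_tail_iff.mp h
  rw [getLast?_eq_getElem?, getElem?_eq_getElem (by omega), Option.some_inj,
    hl.getElem_inj_iff] at ha
  omega

theorem exists_mem_zip_tail_of_ne_getLast? (ha : a ∈ l) (hb : l.getLast? = some b)
    (hab : a ≠ b) : ∃ c, (a, c) ∈ l.zip l.tail := by
  obtain ⟨i, hi, rfl⟩ := mem_iff_getElem.mp ha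
  have hi' : i + 1 < l.length := by
    by_contra! h
    rw [getLast?_eq_getElem?, getElem?_eq_getElem (by omega), Option.some_inj] at hb
    exact hab (by rw [← hb]; congr 1; omega)
  exact ⟨l[i + 1], mem_zip_tail_iff.mpr ⟨i, hi', rfl, rfl⟩⟩

end List

namespace DGraph

open Relation

variable {V : Type u}

theorem subset_trans {G H K : DGraph V} (h₁ : G ⊆ H) (h₂ : H ⊆ K) : G ⊆ K :=
  ⟨h₁.1.trans h₂.1, h₁.2.trans h₂.2⟩

theorem union_subset {G H K : DGraph V} (h₁ : G ⊆ K) (h₂ : H ⊆ K) : G ∪ H ⊆ K :=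
  ⟨Set.union_subset h₁.1 h₂.1, Set.union_subset h₁.2 h₂.2⟩

theorem subset_union_left (G H : DGraph V) : G ⊆ G ∪ H :=
  ⟨Set.subset_union_left, Set.subset_union_left⟩

theorem subset_union_right (G H : DGraph V) : H ⊆ G ∪ H :=
  ⟨Set.subset_union_right, Set.subset_union_right⟩

theorem reverse_subset_reverse {G H : DGraph V} (h : G ⊆ H) : G.reverse ⊆ H.reverse :=
  ⟨h.1, fun _ he => h.2 he⟩

section Reachability

def Adj (G : DGraph V) (a b : V) : Prop :=
  (a, b) ∈ G.edges ∧ a ∈ G.verts ∧ b ∈ G.verts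

variable {G H : DGraph V} {l : List V} {a b c : V}

theorem IsPath.ofList_subset (h : IsPath G l) : ofList l ⊆ G :=
  ⟨h.2.2.1, h.2.2.2⟩

theorem IsPath.of_cons (h : IsPath G (a :: l)) (hl : l ≠ []) : IsPath G l := by
  obtain ⟨-, hnd, hv, he⟩ := h
  refine ⟨hl, hnd.of_cons, fun v hv' => hv v (List.mem_cons_of_mem _ hv'), fun e he' => he e ?_⟩
  obtain ⟨b, t, rfl⟩ := List.exists_cons_of_ne_nil hl
  exact List.mem_cons_of_mem _ he'

theorem IsPath.reaches_of_mem (h : IsPath G l) (hb : l.getLast? = some b) (ha : a ∈ l) :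
    Reaches G a b := by
  induction l with
  | nil => simp at ha
  | cons x t ih =>
    by_cases hx : a = x
    · exact ⟨x :: t, h, by simp [hx], hb⟩
    · have ht : t ≠ [] := by rintro rfl; simp_all
      exact ih (h.of_cons ht) (by rwa [List.getLast?_cons_of_ne_nil ht] at hb)
        ((List.mem_cons.mp ha).resolve_left hx)

theorem Reaches.mem_right (h : Reaches G a b) : b ∈ G.verts := by
  obtain ⟨l, hl, -, hb⟩ := h
  exact hl.2.2.1 b (List.mem_of_getLast? hb)

theorem Reaches.refl (ha : a ∈ G.verts) : Reaches G a a :=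
  ⟨[a], ⟨by simp, by simp, by simpa, by simp⟩, rfl, rfl⟩

theorem Reaches.head (hab : Adj G a b) (hbc : Reaches G b c) : Reaches G a c := by
  obtain ⟨l, hl, hh, hc⟩ := hbc
  by_cases hal : a ∈ l
  · exact hl.reaches_of_mem hc hal
  obtain ⟨t, rfl⟩ := List.head?_eq_some_iff.mp hh
  obtain ⟨-, hnd, hv, he⟩ := hl
  refine ⟨a :: b :: t, ⟨by simp, hnd.cons (by simpa using hal), ?_, ?_⟩, rfl, by simpa using hc⟩
  · simpa [hab.2.1] using hv
  · simpa [hab.1] using he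

theorem reaches_iff_reflTransGen : Reaches G a b ↔ a ∈ G.verts ∧ ReflTransGen (Adj G) a b := by
  constructor
  · rintro ⟨l, hl, hh, hb⟩
    induction l generalizing a with
    | nil => simp at hh
    | cons x t ih =>
      obtain rfl : x = a := by simpa using hh
      have hx : x ∈ G.verts := hl.2.2.1 x (by simp)
      cases t with
      | nil =>
        obtain rfl : x = b := by simpa using hb
        exact ⟨hx, .refl⟩
      | cons y t =>
        have hxy : Adj G x y := ⟨hl.2.2.2 _ (by simp), hx, hl.2.2.1 y (by simp)⟩
        exact ⟨hx, .head hxy (ih (hl.of_cons (by simp)) rfl (by simpa using hb)).2⟩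
  · rintro ⟨ha, h⟩
    induction h using ReflTransGen.head_induction_on with
    | refl => exact .refl ha
    | head hab _ ih => exact .head hab (ih hab.2.2)

theorem Reaches.trans (hab : Reaches G a b) (hbc : Reaches G b c) : Reaches G a c := by
  rw [reaches_iff_reflTransGen] at *
  exact ⟨hab.1, hab.2.trans hbc.2⟩

theorem Reaches.mono (h : Reaches H a b) (hHG : H ⊆ G) : Reaches G a b := by
  obtain ⟨l, ⟨hne, hnd, hv, he⟩, hh, hb⟩ := h
  exact ⟨l, ⟨hne, hnd, fun v hv' => hHG.1 (hv v hv'), fun e he' => hHG.2 (he e he')⟩, hh, hb⟩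

theorem Reaches.of_reverse (h : Reaches G.reverse b a) : Reaches G a b :=
  reaches_iff_reflTransGen.mpr ⟨h.mem_right, ReflTransGen.mono (fun _ _ hxy =>
    ⟨hxy.1, hxy.2.2, hxy.2.1⟩) _ _ (ReflTransGen.swap _ _ (reaches_iff_reflTransGen.mp h).2)⟩

end Reachability

section Arborescence

variable {T T' : DGraph V} {l : List V} {r t w : V}

theorem isInArborescence_ofList (hl : l.Nodup) (ht : l.getLast? = some t) :
    IsInArborescence (ofList l) t := by
  have hpath : IsPath (ofList l) l :=
    ⟨by rintro rfl; simp at ht, hl, fun _ hv => hv, fun _ he => he⟩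
  refine ⟨List.mem_of_getLast? ht, fun e he => List.mem_and_mem_of_mem_zip_tail he,
    fun _ => hl.not_mem_zip_tail_of_getLast? ht, fun v hv hvt => ?_,
    fun v hv => hpath.reaches_of_mem ht hv⟩
  obtain ⟨w, hw⟩ := List.exists_mem_zip_tail_of_ne_getLast? hv ht hvt
  exact ⟨w, hw, fun _ hw' => hl.eq_of_mem_zip_tail hw' hw⟩

theorem IsInArborescence.union (hT : IsInArborescence T w) (hT' : IsInArborescence T' t)
    (h : T.verts ∩ T'.verts = {w}) : IsInArborescence (T ∪ T') t := by
  have hw' : w ∈ T'.verts := (h.symm ▸ Set.mem_singleton w : w ∈ T.verts ∩ T'.verts).2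
  have heq : ∀ v ∈ T.verts, v ∈ T'.verts → v = w := fun v hv hv' =>
    (h ▸ ⟨hv, hv'⟩ : v ∈ ({w} : Set V))
  refine ⟨Or.inr hT'.1, ?_, ?_, ?_, ?_⟩
  · rintro e (he | he)
    · exact ⟨Or.inl (hT.2.1 e he).1, Or.inl (hT.2.1 e he).2⟩
    · exact ⟨Or.inr (hT'.2.1 e he).1, Or.inr (hT'.2.1 e he).2⟩
  · rintro z (hz | hz)
    · obtain rfl := heq t (hT.2.1 _ hz).1 hT'.1
      exact hT.2.2.1 z hz
    · exact hT'.2.2.1 z hz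
  · rintro v (hv | hv) hvt
    · by_cases hv' : v ∈ T'.verts
      · obtain rfl := heq v hv hv'
        obtain ⟨y, hy, hyu⟩ := hT'.2.2.2.1 v hv' hvt
        exact ⟨y, Or.inr hy, fun z hz => hz.elim (absurd · (hT.2.2.1 z)) (hyu z)⟩
      · obtain ⟨y, hy, hyu⟩ := hT.2.2.2.1 v hv fun hvw => hv' (hvw ▸ hw')
        exact ⟨y, Or.inl hy, fun z hz => hz.elim (hyu z) fun hz => absurd (hT'.2.1 _ hz).1 hv'⟩
    · obtain ⟨y, hy, hyu⟩ := hT'.2.2.2.1 v hv hvt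
      refine ⟨y, Or.inr hy, fun z hz => hz.elim (fun hz => ?_) (hyu z)⟩
      obtain rfl := heq v (hT.2.1 _ hz).1 hv
      exact absurd hz (hT.2.2.1 z)
  · rintro v (hv | hv)
    · exact ((hT.2.2.2.2 v hv).mono (subset_union_left T T')).trans
        ((hT'.2.2.2.2 w hw').mono (subset_union_right T T'))
    · exact (hT'.2.2.2.2 v hv).mono (subset_union_right T T')

end Arborescence

def glue (T : DGraph V) (P : V → DGraph V) (c : V × V → V × V) : DGraph V :=
  ⟨⋃ w ∈ T.verts, (P w).verts, (⋃ w ∈ T.verts, (P w).edges) ∪ c '' T.edges⟩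

section Glue

variable {T : DGraph V} {P : V → DGraph V} {c : V × V → V × V} {ex : V → V} {r w x y : V}

theorem subset_glue (hw : w ∈ T.verts) : P w ⊆ glue T P c :=
  ⟨Set.subset_biUnion_of_mem (u := fun w => (P w).verts) hw,
    (Set.subset_biUnion_of_mem (u := fun w => (P w).edges) hw).trans Set.subset_union_left⟩

theorem glue_subset {G : DGraph V} (hP : ∀ w ∈ T.verts, P w ⊆ G)
    (hc : ∀ e ∈ T.edges, c e ∈ G.edges) : glue T P c ⊆ G :=
  ⟨Set.iUnion₂_subset fun w hw => (hP w hw).1, Set.union_subset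
    (Set.iUnion₂_subset fun w hw => (hP w hw).2) (Set.image_subset_iff.mpr hc)⟩

theorem glue_reaches_exit (hT : IsInArborescence T r)
    (hP : ∀ w ∈ T.verts, IsInArborescence (P w) (ex w)) (htail : ∀ e ∈ T.edges, (c e).1 = ex e.1)
    (hhead : ∀ e ∈ T.edges, (c e).2 ∈ (P e.2).verts) (hw : w ∈ T.verts) :
    Reaches (glue T P c) (ex w) (ex r) := by
  have hedge : ∀ e ∈ T.edges, Adj (glue T P c) (ex e.1) (c e).2 := fun e he =>
    ⟨htail e he ▸ Or.inr ⟨e, he, rfl⟩, (subset_glue (hT.2.1 e he).1).1 (hP _ (hT.2.1 e he).1).1,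
      (subset_glue (hT.2.1 e he).2).1 (hhead e he)⟩
  induction (reaches_iff_reflTransGen.mp (hT.2.2.2.2 w hw)).2 using
    ReflTransGen.head_induction_on with
  | refl => exact .refl ((subset_glue hw).1 (hP _ hw).1)
  | @head w w' hww' _ ih =>
    exact .head (hedge _ hww'.1) ((((hP w' hww'.2.2).2.2.2.2 _ (hhead _ hww'.1)).mono
      (subset_glue hww'.2.2)).trans (ih hww'.2.2))

theorem of_mem_glue_edges (hT : IsInArborescence T r)
    (hP : ∀ w ∈ T.verts, IsInArborescence (P w) (ex w))
    (hdisj : T.verts.PairwiseDisjoint fun w => (P w).verts)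
    (htail : ∀ e ∈ T.edges, (c e).1 = ex e.1) (hw : w ∈ T.verts) (hx : x ∈ (P w).verts)
    (hxy : (x, y) ∈ (glue T P c).edges) :
    (x, y) ∈ (P w).edges ∨ x = ex w ∧ ∃ e ∈ T.edges, e.1 = w ∧ c e = (x, y) := by
  rcases hxy with hxy | ⟨e, he, hce⟩
  · obtain ⟨w', hw', hxy⟩ := Set.mem_iUnion₂.mp hxy
    obtain rfl := hdisj.elim_set hw' hw x ((hP w' hw').2.1 _ hxy).1 hx
    exact .inl hxy
  · have hxe : x = ex e.1 := by rw [← htail e he, hce]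
    have he1 : e.1 ∈ T.verts := (hT.2.1 e he).1
    obtain rfl := hdisj.elim_set he1 hw x (hxe ▸ (hP e.1 he1).1) hx
    exact .inr ⟨hxe, e, he, rfl, hce⟩

theorem exists_unique_glue_edges (hT : IsInArborescence T r)
    (hP : ∀ w ∈ T.verts, IsInArborescence (P w) (ex w))
    (hdisj : T.verts.PairwiseDisjoint fun w => (P w).verts)
    (htail : ∀ e ∈ T.edges, (c e).1 = ex e.1) (hx : x ∈ (glue T P c).verts) (hxr : x ≠ ex r) :
    ∃! y, (x, y) ∈ (glue T P c).edges := by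
  obtain ⟨w, hw, hxw⟩ := Set.mem_iUnion₂.mp hx
  have hout := fun {y} => of_mem_glue_edges (y := y) hT hP hdisj htail hw hxw
  by_cases hxe : x = ex w
  · subst hxe
    have hwr : w ≠ r := fun h => hxr (h ▸ rfl)
    obtain ⟨p, hp, hpu⟩ := hT.2.2.2.1 w hw hwr
    refine ⟨(c (w, p)).2, ?_, fun y hy => ?_⟩
    · exact Or.inr ⟨(w, p), hp, by rw [← htail _ hp]⟩
    rcases hout hy with hy | ⟨-, e, he, rfl, hce⟩
    · exact absurd hy ((hP w hw).2.2.1 y)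
    · rw [← hpu e.2 he, hce]
  · obtain ⟨y, hy, hyu⟩ := (hP w hw).2.2.2.1 x hxw hxe
    refine ⟨y, (subset_glue hw).2 hy, fun z hz => ?_⟩
    rcases hout hz with hz | ⟨rfl, -⟩
    · exact hyu z hz
    · exact absurd rfl hxe

theorem IsInArborescence.glue (hT : IsInArborescence T r)
    (hP : ∀ w ∈ T.verts, IsInArborescence (P w) (ex w))
    (hdisj : T.verts.PairwiseDisjoint fun w => (P w).verts)
    (htail : ∀ e ∈ T.edges, (c e).1 = ex e.1) (hhead : ∀ e ∈ T.edges, (c e).2 ∈ (P e.2).verts) :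
    IsInArborescence (glue T P c) (ex r) := by
  refine ⟨(subset_glue hT.1).1 (hP r hT.1).1, ?_, fun y hy => ?_,
    fun x hx hxr => exists_unique_glue_edges hT hP hdisj htail hx hxr, fun x hx => ?_⟩
  · rintro e (he | ⟨e, he, rfl⟩)
    · obtain ⟨w, hw, he⟩ := Set.mem_iUnion₂.mp he
      exact ⟨(subset_glue hw).1 ((hP w hw).2.1 e he).1, (subset_glue hw).1 ((hP w hw).2.1 e he).2⟩
    · exact ⟨(subset_glue (hT.2.1 e he).1).1 (htail e he ▸ (hP _ (hT.2.1 e he).1).1),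
        (subset_glue (hT.2.1 e he).2).1 (hhead e he)⟩
  · rcases of_mem_glue_edges hT hP hdisj htail hT.1 (hP r hT.1).1 hy with hy | ⟨-, e, he, rfl, -⟩
    · exact (hP r hT.1).2.2.1 y hy
    · exact hT.2.2.1 e.2 he
  · obtain ⟨w, hw, hxw⟩ := Set.mem_iUnion₂.mp hx
    exact (((hP w hw).2.2.2.2 x hxw).mono (subset_glue hw)).trans
      (glue_reaches_exit hT hP htail hhead hw)

end Glue

namespace TreeLikeModel

variable {D H : DGraph V} (M : TreeLikeModel D H) {l : List V} {w x : V}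

theorem tin_subset_bag (hw : w ∈ H.verts) : M.tin w ⊆ M.bag w :=
  M.bag_eq w hw ▸ subset_union_left _ _

theorem tout_subset_bag (hw : w ∈ H.verts) : M.tout w ⊆ M.bag w :=
  M.bag_eq w hw ▸ subset_union_right _ _

theorem tin_subset (hw : w ∈ H.verts) : M.tin w ⊆ D :=
  subset_trans (M.tin_subset_bag hw) (M.bag_sub w hw)

theorem tout_subset (hw : w ∈ H.verts) : M.tout w ⊆ D :=
  subset_trans (M.tout_subset_bag hw) (M.bag_sub w hw)

theorem pairwiseDisjoint_bag : H.verts.PairwiseDisjoint fun v => (M.bag v).verts :=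
  fun v hv w hw hne => Set.disjoint_iff_inter_eq_empty.mpr (M.bag_disjoint v hv w hw hne)

theorem disjoint_biUnion_bag {A B : Set V} (hA : A ⊆ H.verts) (hB : B ⊆ H.verts)
    (hAB : Disjoint A B) : Disjoint (⋃ u ∈ A, (M.bag u).verts) (⋃ u ∈ B, (M.bag u).verts) := by
  refine Set.disjoint_left.mpr fun z hzA hzB => ?_
  obtain ⟨u, hu, hzu⟩ := Set.mem_iUnion₂.mp hzA
  obtain ⟨u', hu', hzu'⟩ := Set.mem_iUnion₂.mp hzB
  obtain rfl := M.pairwiseDisjoint_bag.elim_set (hA hu) (hB hu') z hzu hzu'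
  exact Set.disjoint_left.mp hAB hu hu'

theorem exists_exit {T : DGraph V} {r : V} (hT : IsInArborescence T r) (hTH : T ⊆ H)
    (hw : w ∈ T.verts) : ∃ l x, IsPathFrom (M.tout w) w x l ∧ (w = r → l = [w]) ∧
      ∀ e ∈ T.edges, e.1 = w → (M.emap e).1 = x := by
  by_cases hwr : w = r
  · subst hwr
    refine ⟨[w], w, ⟨⟨by simp, by simp,
      List.forall_mem_singleton.mpr (M.tout_arb w (hTH.1 hw)).1, by simp⟩, rfl, rfl⟩,
      fun _ => rfl, ?_⟩
    rintro ⟨a, b⟩ he rfl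
    exact absurd he (hT.2.2.1 b)
  · obtain ⟨p, hp, hpu⟩ := hT.2.2.2.1 w hw hwr
    have hx := M.emap_tail (w, p) (hTH.2 hp)
    obtain ⟨l, hl⟩ := ((M.tout_arb w (hTH.1 hw)).2.2.2.2 _ hx).of_reverse
    refine ⟨l, _, hl, fun h => absurd h hwr, ?_⟩
    rintro ⟨a, b⟩ he rfl
    rw [hpu b he]

theorem isInArborescence_tin_union (hw : w ∈ H.verts) (hl : IsPathFrom (M.tout w) w x l) :
    IsInArborescence (M.tin w ∪ ofList l) x := by
  refine (M.tin_arb w hw).union (isInArborescence_ofList hl.1.2.1 hl.2.2) ?_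
  refine Set.eq_singleton_iff_unique_mem.mpr
    ⟨⟨(M.tin_arb w hw).1, List.mem_of_head? hl.2.1⟩, fun y hy => ?_⟩
  rw [← Set.mem_singleton_iff, ← M.roots_eq w hw]
  exact ⟨hy.1, hl.1.2.2.1 y hy.2⟩

theorem tin_union_subset_bag (hw : w ∈ H.verts) (hl : IsPath (M.tout w) l) :
    M.tin w ∪ ofList l ⊆ M.bag w :=
  union_subset (M.tin_subset_bag hw) (subset_trans hl.ofList_subset (M.tout_subset_bag hw))

def reverse : TreeLikeModel D.reverse H.reverse where
  bag v := (M.bag v).reverse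
  tin v := (M.tout v).reverse
  tout v := (M.tin v).reverse
  emap e := (M.emap e.swap).swap
  bag_sub v hv := reverse_subset_reverse (M.bag_sub v hv)
  bag_disjoint := M.bag_disjoint
  bag_eq v hv := by
    rw [M.bag_eq v hv]
    exact congrArg₂ DGraph.mk (Set.union_comm _ _) (Set.union_comm _ _)
  tin_arb := M.tout_arb
  tout_arb := M.tin_arb
  roots_eq v hv := (Set.inter_comm _ _).trans (M.roots_eq v hv)
  emap_mem e he := M.emap_mem e.swap he
  emap_tail e he := M.emap_head e.swap he
  emap_head e he := M.emap_tail e.swap he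

end TreeLikeModel

section Composition

variable {D₁ D₂ D₃ : DGraph V}

/-- The in-arborescence at `v` of the composition of the models `M₁` and `M₂`. -/
structure IsComposedInArborescence (M₁ : TreeLikeModel D₂ D₁) (M₂ : TreeLikeModel D₃ D₂)
    (v : V) (T : DGraph V) : Prop where
  isInArborescence : IsInArborescence T v
  subset : T ⊆ D₃
  verts_subset : T.verts ⊆ ⋃ w ∈ (M₁.tin v).verts, (M₂.bag w).verts
  tin_subset : ∀ w ∈ (M₁.tin v).verts, (M₂.tin w).verts ⊆ T.verts
  inter_bag_subset : T.verts ∩ (M₂.bag v).verts ⊆ (M₂.tin v).verts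

theorem exists_isComposedInArborescence (M₁ : TreeLikeModel D₂ D₁) (M₂ : TreeLikeModel D₃ D₂)
    {v : V} (hv : v ∈ D₁.verts) : ∃ T, IsComposedInArborescence M₁ M₂ v T := by
  set S := M₁.tin v
  have hS : S ⊆ D₂ := M₁.tin_subset hv
  have hSv : IsInArborescence S v := M₁.tin_arb v hv
  have hexit : ∀ w, ∃ l x, w ∈ S.verts → IsPathFrom (M₂.tout w) w x l ∧ (w = v → l = [w]) ∧
      ∀ e ∈ S.edges, e.1 = w → (M₂.emap e).1 = x := fun w => by
    by_cases hw : w ∈ S.verts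
    · obtain ⟨l, x, h⟩ := M₂.exists_exit hSv hS hw
      exact ⟨l, x, fun _ => h⟩
    · exact ⟨[], w, (absurd · hw)⟩
  choose l x hl hroot htail using hexit
  set P := fun w => M₂.tin w ∪ ofList (l w)
  have hPbag : ∀ w ∈ S.verts, P w ⊆ M₂.bag w := fun w hw =>
    M₂.tin_union_subset_bag (hS.1 hw) (hl w hw).1
  have hU : IsInArborescence (glue S P M₂.emap) (x v) :=
    hSv.glue (fun w hw => M₂.isInArborescence_tin_union (hS.1 hw) (hl w hw))
      ((M₂.pairwiseDisjoint_bag.subset hS.1).mono_on fun w hw => (hPbag w hw).1)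
      (fun e he => htail e.1 (hSv.2.1 e he).1 e he rfl)
      (fun e he => Or.inl (M₂.emap_head e (hS.2 he)))
  have hxv : x v = v := by
    simpa [hroot v hSv.1 rfl] using (hl v hSv.1).2.2.symm
  refine ⟨glue S P M₂.emap, hxv ▸ hU,
    glue_subset (fun w hw => subset_trans (hPbag w hw) (M₂.bag_sub w (hS.1 hw)))
      (fun e he => M₂.emap_mem e (hS.2 he)),
    Set.biUnion_mono subset_rfl fun w hw => (hPbag w hw).1,
    fun w hw => Set.subset_union_left.trans (subset_glue (P := P) (c := M₂.emap) hw).1, ?_⟩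
  rintro y ⟨hy, hyv⟩
  obtain ⟨w, hw, hyw⟩ := Set.mem_iUnion₂.mp hy
  obtain rfl := M₂.pairwiseDisjoint_bag.elim_set (hS.1 hw) (hS.1 hSv.1) y ((hPbag w hw).1 hyw) hyv
  rcases hyw with hyw | hyw
  · exact hyw
  · obtain rfl : y = w := by simpa [hroot w hw rfl, ofList] using hyw
    exact (M₂.tin_arb y (hS.1 hw)).1

namespace IsComposedInArborescence

variable {M₁ : TreeLikeModel D₂ D₁} {M₂ : TreeLikeModel D₃ D₂} {v : V} {T T' : DGraph V}

theorem verts_subset_biUnion_bag (hT : IsComposedInArborescence M₁ M₂ v T)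
    (hv : v ∈ D₁.verts) : T.verts ⊆ ⋃ u ∈ (M₁.bag v).verts, (M₂.bag u).verts :=
  hT.verts_subset.trans (Set.biUnion_subset_biUnion_left (M₁.tin_subset_bag hv).1)

theorem inter_eq_singleton (hT : IsComposedInArborescence M₁ M₂ v T)
    (hT' : IsComposedInArborescence M₁.reverse M₂.reverse v T') (hv : v ∈ D₁.verts) :
    T.verts ∩ T'.verts = {v} := by
  have hvD₂ : v ∈ D₂.verts := (M₁.tin_subset hv).1 (M₁.tin_arb v hv).1
  refine Set.eq_singleton_iff_unique_mem.mpr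
    ⟨⟨hT.tin_subset v (M₁.tin_arb v hv).1 (M₂.tin_arb v hvD₂).1,
      hT'.tin_subset v (M₁.tout_arb v hv).1 (M₂.tout_arb v hvD₂).1⟩, ?_⟩
  rintro z ⟨hz, hz'⟩
  obtain ⟨u, hu, hzu⟩ := Set.mem_iUnion₂.mp (hT.verts_subset hz)
  obtain ⟨u', hu', hzu'⟩ := Set.mem_iUnion₂.mp (hT'.verts_subset hz')
  obtain rfl := M₂.pairwiseDisjoint_bag.elim_set ((M₁.tin_subset hv).1 hu)
    ((M₁.tout_subset hv).1 hu') z hzu hzu'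
  obtain rfl : u = v := by
    rw [← Set.mem_singleton_iff, ← M₁.roots_eq v hv]
    exact ⟨hu, hu'⟩
  rw [← Set.mem_singleton_iff, ← M₂.roots_eq u hvD₂]
  exact ⟨hT.inter_bag_subset ⟨hz, hzu⟩, hT'.inter_bag_subset ⟨hz', hzu⟩⟩

end IsComposedInArborescence

/-- Edges of `D₁` may have ends outside `D₁.verts`; at such vertices the graph on all of `V`
satisfies what the edge conditions of a model ask for. -/
theorem exists_isComposedInArborescence_family (M₁ : TreeLikeModel D₂ D₁)
    (M₂ : TreeLikeModel D₃ D₂) : ∃ T : V → DGraph V,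
      (∀ v ∈ D₁.verts, IsComposedInArborescence M₁ M₂ v (T v)) ∧
      ∀ v, ∀ w ∈ (M₁.tin v).verts, (M₂.tin w).verts ⊆ (T v).verts := by
  have : ∀ v, ∃ T : DGraph V, (v ∈ D₁.verts → IsComposedInArborescence M₁ M₂ v T) ∧
      ∀ w ∈ (M₁.tin v).verts, (M₂.tin w).verts ⊆ T.verts := fun v => by
    by_cases hv : v ∈ D₁.verts
    · obtain ⟨T, hT⟩ := exists_isComposedInArborescence M₁ M₂ hv
      exact ⟨T, fun _ => hT, hT.tin_subset⟩
    · exact ⟨⟨Set.univ, ∅⟩, (absurd · hv), fun _ _ => Set.subset_univ _⟩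
  choose T hT hT' using this
  exact ⟨T, hT, hT'⟩

end Composition

end DGraph

open DGraph in
/-- If `D₁` is a butterfly minor of `D₂` and `D₂` is a
butterfly minor of `D₃`, then `D₁` is a butterfly minor of `D₃`. -/
theorem butterflyMinor_trans {V : Type u} (D₁ D₂ D₃ : DGraph V)
    (h₁₂ : D₂.IsButterflyMinor D₁) (h₂₃ : D₃.IsButterflyMinor D₂) :
    D₃.IsButterflyMinor D₁ := by
  obtain ⟨M₁⟩ := h₁₂
  obtain ⟨M₂⟩ := h₂₃
  obtain ⟨Tin, hin, hin_tin⟩ := exists_isComposedInArborescence_family M₁ M₂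
  obtain ⟨Tout, hout, hout_tout⟩ := exists_isComposedInArborescence_family M₁.reverse M₂.reverse
  have hbag : ∀ v ∈ D₁.verts, (Tin v ∪ (Tout v).reverse).verts ⊆
      ⋃ u ∈ (M₁.bag v).verts, (M₂.bag u).verts := fun v hv =>
    Set.union_subset ((hin v hv).verts_subset_biUnion_bag hv)
      ((hout v hv).verts_subset_biUnion_bag hv)
  exact ⟨{
    bag := fun v => Tin v ∪ (Tout v).reverse
    tin := Tin
    tout := fun v => (Tout v).reverse
    emap := fun e => M₂.emap (M₁.emap e)
    bag_sub := fun v hv =>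
      union_subset (hin v hv).subset (reverse_subset_reverse (hout v hv).subset)
    bag_disjoint := fun v hv w hw hvw => Set.disjoint_iff_inter_eq_empty.mp <|
      (M₂.disjoint_biUnion_bag (M₁.bag_sub v hv).1 (M₁.bag_sub w hw).1
        (M₁.pairwiseDisjoint_bag hv hw hvw)).mono (hbag v hv) (hbag w hw)
    bag_eq := fun _ _ => rfl
    tin_arb := fun v hv => (hin v hv).isInArborescence
    tout_arb := fun v hv => (hout v hv).isInArborescence
    roots_eq := fun v hv => (hin v hv).inter_eq_singleton (T' := Tout v) (hout v hv) hv
    emap_mem := fun e he => M₂.emap_mem _ (M₁.emap_mem e he)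
    emap_tail := fun e he =>
      hout_tout e.1 _ (M₁.emap_tail e he) (M₂.emap_tail _ (M₁.emap_mem e he))
    emap_head := fun e he =>
      hin_tin e.2 _ (M₁.emap_head e he) (M₂.emap_head _ (M₁.emap_mem e he)) }⟩
end

section
/- If R is an out-ray and S is an in-ray with common root such that R and S are knit, then there exists a sequence (C_i)_{i∈ℕ} of directed cycles such that for all j ≠ k ∈ ℕ the intersection C_j ∩ C_k is a directed path if |j − k| = 1 and is empty otherwise, and ⋃_{i∈ℕ} C_i = R ∪ S. -/
/-!
Common definitions: directed graphs as vertex/edge sets, directed paths and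
walks, rays, arborescences, tree-like models and butterfly minors, laced
paths, knit rays, and the shapes (dominated directed rays, stars, combs,
chains of triangles) from the paper.
-/

universe u

/-!
Write `x_i = f (p i) = g (p' i)` and `y_i = f (q i) = g (q' i)`, and let `x_{-1}` be the root.
The `i`-th cycle runs along `R` from `x_{i-1}` to `y_i` and back along `S` from `y_i` to
`x_{i-1}`; its two halves meet only in their ends because the stretches of `S` between consecutive
shared segments avoid `R`. Consecutive cycles overlap exactly in the shared segment
`x_i R y_i = y_i S x_i`, cycles further apart have no common vertex, and every edge of `R` or `S`
lies on one of the cycles, since an edge of `S` inside a shared segment is an edge of `R`.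
-/

lemma List.zip_tail_map_range' {V : Type u} (f : ℕ → V) (a n : ℕ) :
    ((List.range' a (n + 1)).map f).zip ((List.range' a (n + 1)).map f).tail =
      (List.range' a n).map fun j => (f j, f (j + 1)) := by
  induction n generalizing a with
  | zero => simp
  | succ n ih =>
    rw [List.range'_succ, List.range'_succ (s := a) (n := n)]
    simpa [List.range'_succ (s := a + 1) (n := n)] using ih (a + 1)

lemma exists_mem_Ico_of_strictMono {a b : ℕ → ℕ} (ha : a 0 = 0)
    (hab : ∀ i, a (i + 1) ≤ b i) (hb : StrictMono b) (n : ℕ) :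
    ∃ i, n ∈ Set.Ico (a i) (b i) := by
  classical
  have hex : ∃ i, n < b i := ⟨n + 1, Nat.lt_succ_self n |>.trans_le (hb.id_le (n + 1))⟩
  refine ⟨Nat.find hex, ?_, Nat.find_spec hex⟩
  rcases h : Nat.find hex with _ | i
  · exact ha.le.trans (Nat.zero_le n)
  · exact (hab i).trans (not_lt.1 (Nat.find_min hex (h ▸ Nat.lt_succ_self i)))

namespace DGraph

variable {V : Type u}

protected lemma ext {G H : DGraph V} (hv : G.verts = H.verts) (he : G.edges = H.edges) :
    G = H := by
  cases G; cases H; congr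

@[simp] lemma verts_union (G H : DGraph V) : (G ∪ H).verts = G.verts ∪ H.verts := rfl
@[simp] lemma edges_union (G H : DGraph V) : (G ∪ H).edges = G.edges ∪ H.edges := rfl

lemma inter_comm (G H : DGraph V) : G ∩ H = H ∩ G :=
  DGraph.ext (Set.inter_comm _ _) (Set.inter_comm _ _)

lemma cycleOfList_eq_ofList_append_take (l : List V) :
    cycleOfList l = ofList (l ++ l.take 1) := by
  rcases l with _ | ⟨x, l⟩
  · rfl
  refine DGraph.ext ?_ ?_
  · ext v
    simp only [cycleOfList, ofList, Set.mem_ofPred_eq, List.mem_append]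
    exact ⟨Or.inl, fun h => h.elim id fun h => List.mem_of_mem_take h⟩
  · ext e
    have hlen : (x :: l).length = (l ++ (x :: l).take 1).length := by simp
    simp only [cycleOfList, ofList, Set.mem_ofPred_eq, List.cons_append, List.tail_cons]
    rw [← List.cons_append, ← List.append_nil (l ++ _), List.zip_append hlen]
    simp

def outSegment (f : ℕ → V) (a b : ℕ) : DGraph V :=
  ⟨f '' Set.Icc a b, (fun j => (f j, f (j + 1))) '' Set.Ico a b⟩

def inSegment (g : ℕ → V) (a b : ℕ) : DGraph V :=
  ⟨g '' Set.Icc a b, (fun m => (g (m + 1), g m)) '' Set.Ico a b⟩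

lemma ofList_map_range' (f : ℕ → V) (a n : ℕ) :
    ofList ((List.range' a (n + 1)).map f) = outSegment f a (a + n) := by
  refine DGraph.ext ?_ ?_
  · ext v
    simp only [ofList, outSegment, Set.mem_ofPred_eq, List.mem_map, List.mem_range'_1,
      Set.mem_image, Set.mem_Icc, and_assoc, ← add_assoc, Nat.lt_add_one_iff]
  · ext e
    simp [ofList, outSegment, List.zip_tail_map_range', List.mem_range'_1, and_assoc]

lemma exists_ofList_eq_outSegment {f : ℕ → V} (hf : Function.Injective f) {a b : ℕ}
    (hab : a ≤ b) : ∃ m : List V, m ≠ [] ∧ m.Nodup ∧ outSegment f a b = ofList m := by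
  obtain ⟨n, rfl⟩ := Nat.exists_eq_add_of_le hab
  exact ⟨(List.range' a (n + 1)).map f, by simp [List.range'_succ],
    (List.nodup_range' ..).map hf, (ofList_map_range' f a n).symm⟩

section JoinedSegments

variable {f g : ℕ → V} {a b a' b' : ℕ}

/-- The closed walk `f a → ⋯ → f b = g b' → g (b' - 1) → ⋯`. -/
def joinWalk (f g : ℕ → V) (a b b' : ℕ) (t : ℕ) : V :=
  if t ≤ b - a then f (a + t) else g (b' + (b - a) - t)

lemma joinWalk_of_le {t : ℕ} (ht : t ≤ b - a) : joinWalk f g a b b' t = f (a + t) :=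
  if_pos ht

lemma joinWalk_of_ge (hb : f b = g b') (hab : a ≤ b) {t : ℕ} (ht : b - a ≤ t) :
    joinWalk f g a b b' t = g (b' + (b - a) - t) := by
  unfold joinWalk
  split_ifs with h
  · rw [show t = b - a by omega, Nat.add_sub_cancel' hab, hb]; congr 1; omega
  · rfl

lemma outSegment_joinWalk (hab : a ≤ b) (hab' : a' ≤ b') (hb : f b = g b') :
    outSegment (joinWalk f g a b b') 0 (b - a + (b' - a')) =
      outSegment f a b ∪ inSegment g a' b' := by
  refine DGraph.ext ?_ ?_
  · ext v
    simp only [outSegment, inSegment, verts_union, Set.mem_union, Set.mem_image, Set.mem_Icc]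
    constructor
    · rintro ⟨t, ⟨-, ht⟩, rfl⟩
      rcases le_total t (b - a) with h | h
      · exact Or.inl ⟨a + t, ⟨by omega, by omega⟩, (joinWalk_of_le h).symm⟩
      · exact Or.inr ⟨b' + (b - a) - t, ⟨by omega, by omega⟩,
          (joinWalk_of_ge hb hab h).symm⟩
    · rintro (⟨j, hj, rfl⟩ | ⟨m, hm, rfl⟩)
      · refine ⟨j - a, ⟨by omega, by omega⟩, ?_⟩
        rw [joinWalk_of_le (by omega), Nat.add_sub_cancel' hj.1]
      · refine ⟨b' + (b - a) - m, ⟨by omega, by omega⟩, ?_⟩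
        rw [joinWalk_of_ge hb hab (by omega)]; congr 1; omega
  · ext e
    simp only [outSegment, inSegment, edges_union, Set.mem_union, Set.mem_image, Set.mem_Ico]
    constructor
    · rintro ⟨t, ⟨-, ht⟩, rfl⟩
      rcases lt_or_ge t (b - a) with h | h
      · refine Or.inl ⟨a + t, ⟨by omega, by omega⟩, ?_⟩
        rw [joinWalk_of_le h.le, joinWalk_of_le h]; rfl
      · refine Or.inr ⟨b' + (b - a) - t - 1, ⟨by omega, by omega⟩, ?_⟩
        rw [joinWalk_of_ge hb hab h, joinWalk_of_ge hb hab (by omega)]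
        congr 2; omega
    · rintro (⟨j, hj, rfl⟩ | ⟨m, hm, rfl⟩)
      · refine ⟨j - a, ⟨by omega, by omega⟩, ?_⟩
        rw [joinWalk_of_le (by omega), joinWalk_of_le (by omega), Nat.add_sub_cancel' hj.1,
          ← add_assoc, Nat.add_sub_cancel' hj.1]
      · refine ⟨b' + (b - a) - m - 1, ⟨by omega, by omega⟩, ?_⟩
        rw [joinWalk_of_ge hb hab (by omega), joinWalk_of_ge hb hab (by omega)]
        congr 2 <;> omega

theorem isDirectedCycle_outSegment_union_inSegment (hf : Function.Injective f)
    (hg : Function.Injective g) (hab : a < b) (hab' : a' < b') (ha : f a = g a')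
    (hb : f b = g b') (hdisj : ∀ m ∈ Set.Ioo a' b', g m ∉ f '' Set.Icc a b) :
    IsDirectedCycle (outSegment f a b ∪ inSegment g a' b') := by
  obtain ⟨n, hN⟩ : ∃ n, b - a + (b' - a') = n + 1 := ⟨b - a + (b' - a') - 1, by omega⟩
  have hcross : ∀ s t, s ≤ b - a → b - a < t → t ≤ n →
      joinWalk f g a b b' s ≠ joinWalk f g a b b' t := by
    intro s t hs ht htn hst
    refine hdisj (b' + (b - a) - t) ⟨by omega, by omega⟩
      ⟨a + s, ⟨by omega, by omega⟩, ?_⟩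
    rw [← joinWalk_of_le (f := f) (g := g) (b' := b') hs, hst, joinWalk_of_ge hb hab.le ht.le]
  have hinj : ∀ s ∈ List.range' 0 (n + 1), ∀ t ∈ List.range' 0 (n + 1),
      joinWalk f g a b b' s = joinWalk f g a b b' t → s = t := by
    simp only [List.mem_range'_1]
    intro s hs t ht hst
    rcases le_or_gt s (b - a) with h₁ | h₁ <;> rcases le_or_gt t (b - a) with h₂ | h₂
    · rw [joinWalk_of_le h₁, joinWalk_of_le h₂] at hst
      have := hf hst; omega
    · exact absurd hst (hcross s t h₁ h₂ (by omega))
    · exact absurd hst.symm (hcross t s h₂ h₁ (by omega))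
    · rw [joinWalk_of_ge hb hab.le h₁.le, joinWalk_of_ge hb hab.le h₂.le] at hst
      have := hg hst; omega
  have hclosed : joinWalk f g a b b' (n + 1) = joinWalk f g a b b' 0 := by
    rw [joinWalk_of_ge hb hab.le (by omega), joinWalk_of_le (Nat.zero_le _), add_zero, ha]
    congr 1; omega
  refine ⟨(List.range' 0 (n + 1)).map (joinWalk f g a b b'),
    (List.nodup_range' ..).map_on hinj, by rw [List.length_map, List.length_range']; omega, ?_⟩
  have hpath := ofList_map_range' (joinWalk f g a b b') 0 (n + 1)
  rw [zero_add, List.range'_concat, List.map_append, one_mul, zero_add] at hpath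
  rw [← outSegment_joinWalk hab.le hab'.le hb, hN, ← hpath, cycleOfList_eq_ofList_append_take,
    List.range'_succ]
  simp [hclosed]

lemma verts_outSegment_union_inSegment (hab : a ≤ b) (ha : f a = g a')
    (hb : f b = g b') :
    (outSegment f a b ∪ inSegment g a' b').verts = f '' Set.Icc a b ∪ g '' Set.Ioo a' b' := by
  refine Set.Subset.antisymm ?_
    (Set.union_subset_union_right _ (Set.image_mono Set.Ioo_subset_Icc_self))
  rintro _ (hv | ⟨m, hm, rfl⟩)
  · exact Or.inl hv
  rcases eq_or_lt_of_le hm.1 with rfl | h₁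
  · exact Or.inl ⟨a, ⟨le_rfl, hab⟩, ha⟩
  rcases eq_or_lt_of_le hm.2 with rfl | h₂
  · exact Or.inl ⟨b, ⟨hab, le_rfl⟩, hb⟩
  exact Or.inr ⟨m, ⟨h₁, h₂⟩, rfl⟩

lemma mem_verts_of_mem_edges_outSegment_union_inSegment {e : V × V}
    (he : e ∈ (outSegment f a b ∪ inSegment g a' b').edges) :
    e.1 ∈ (outSegment f a b ∪ inSegment g a' b').verts ∧
      e.2 ∈ (outSegment f a b ∪ inSegment g a' b').verts := by
  rcases he with ⟨j, hj, rfl⟩ | ⟨m, hm, rfl⟩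
  · exact ⟨Or.inl ⟨j, Set.Ico_subset_Icc_self hj, rfl⟩,
      Or.inl ⟨j + 1, ⟨Nat.le_succ_of_le hj.1, hj.2⟩, rfl⟩⟩
  · exact ⟨Or.inr ⟨m + 1, ⟨Nat.le_succ_of_le hm.1, hm.2⟩, rfl⟩,
      Or.inr ⟨m, Set.Ico_subset_Icc_self hm, rfl⟩⟩

lemma eq_of_mem_edges_outSegment_union_inSegment (hf : Function.Injective f)
    (hb : f b = g b') (hdisj : ∀ m ∈ Set.Ioo a' b', g m ∉ f '' Set.Icc a b) {e : V × V}
    (he : e ∈ (outSegment f a b ∪ inSegment g a' b').edges) {j : ℕ} (haj : a ≤ j)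
    (hjb : j < b) (hfst : e.1 = f j) : e = (f j, f (j + 1)) := by
  rcases he with ⟨i, -, rfl⟩ | ⟨m, ⟨hm₁, hm₂⟩, rfl⟩
  · rw [hf hfst]
  · exfalso
    change g (m + 1) = f j at hfst
    rcases lt_or_eq_of_le (Nat.succ_le_of_lt hm₂) with h | rfl
    · exact hdisj (m + 1) ⟨Nat.lt_succ_of_le hm₁, h⟩ ⟨j, ⟨haj, hjb.le⟩, hfst.symm⟩
    · have := hf (hb.trans hfst); omega

end JoinedSegments

section Knit

variable {f g : ℕ → V} {p q p' q' : ℕ → ℕ}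

structure KnitIndices (f g : ℕ → V) (p q p' q' : ℕ → ℕ) : Prop where
  root : f 0 = g 0
  order_out : ∀ i, 0 < p i ∧ p i ≤ q i ∧ q i < p (i + 1)
  order_in : ∀ i, 0 < q' i ∧ q' i ≤ p' i ∧ p' i < q' (i + 1)
  length_eq : ∀ i, q i - p i = p' i - q' i
  shared : ∀ i, ∀ k ≤ q i - p i, f (p i + k) = g (p' i - k)
  gap : ∀ i m, p' i < m → m < q' (i + 1) → g m ∉ Set.range f
  gap_zero : ∀ m, 0 < m → m < q' 0 → g m ∉ Set.range f

lemma Knit.exists_knitIndices (h : Knit f g) : ∃ p q p' q', KnitIndices f g p q p' q' := by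
  obtain ⟨h0, p, q, p', q', h1, h2, h3, h4, h5, h6⟩ := h
  exact ⟨p, q, p', q', h0, h1, h2, h3, h4, h5, h6⟩

def cycleStart (p : ℕ → ℕ) : ℕ → ℕ
  | 0 => 0
  | i + 1 => p i

/-- The cycle `x_{i-1} R y_i ∪ y_i S x_{i-1}`, where `x_i = f (p i)`, `y_i = f (q i)` and
`x_{-1}` is the root. -/
def knitCycle (f g : ℕ → V) (p q p' q' : ℕ → ℕ) (i : ℕ) : DGraph V :=
  outSegment f (cycleStart p i) (q i) ∪ inSegment g (cycleStart p' i) (q' i)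

namespace KnitIndices

variable (K : KnitIndices f g p q p' q')
include K

lemma strictMono_p : StrictMono p :=
  strictMono_nat_of_lt_succ fun i => (K.order_out i).2.1.trans_lt (K.order_out i).2.2

lemma strictMono_q : StrictMono q :=
  strictMono_nat_of_lt_succ fun i => (K.order_out i).2.2.trans_le (K.order_out (i + 1)).2.1

lemma strictMono_p' : StrictMono p' :=
  strictMono_nat_of_lt_succ fun i => (K.order_in i).2.2.trans_le (K.order_in (i + 1)).2.1

lemma g_eq_f (i : ℕ) {m : ℕ} (h₁ : q' i ≤ m) (h₂ : m ≤ p' i) :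
    g m = f (p i + (p' i - m)) := by
  have := K.shared i (p' i - m) (by have := K.length_eq i; omega)
  rwa [Nat.sub_sub_self h₂, eq_comm] at this

lemma f_q (i : ℕ) : f (q i) = g (q' i) := by
  have := K.order_out i; have := K.order_in i; have := K.length_eq i
  rw [K.g_eq_f i le_rfl (K.order_in i).2.1]
  congr 1; omega

lemma f_cycleStart (i : ℕ) : f (cycleStart p i) = g (cycleStart p' i) := by
  cases i with
  | zero => exact K.root
  | succ i => rw [cycleStart, cycleStart, K.g_eq_f i (K.order_in i).2.1 le_rfl, Nat.sub_self,
      add_zero]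

lemma cycleStart_lt_p (i : ℕ) : cycleStart p i < p i := by
  cases i with
  | zero => exact (K.order_out 0).1
  | succ i => exact K.strictMono_p (Nat.lt_succ_self i)

lemma cycleStart_lt_q (i : ℕ) : cycleStart p i < q i :=
  (K.cycleStart_lt_p i).trans_le (K.order_out i).2.1

lemma cycleStart_lt_q' (i : ℕ) : cycleStart p' i < q' i := by
  cases i with
  | zero => exact (K.order_in 0).1
  | succ i => exact (K.order_in i).2.2

lemma p_le_cycleStart {j k : ℕ} (h : j < k) : p j ≤ cycleStart p k := by
  obtain ⟨k, rfl⟩ := Nat.exists_eq_add_one_of_ne_zero (Nat.ne_zero_of_lt h)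
  exact K.strictMono_p.monotone (Nat.le_of_lt_succ h)

lemma q_lt_cycleStart {j k : ℕ} (h : j + 1 < k) : q j < cycleStart p k :=
  (K.order_out j).2.2.trans_le (K.p_le_cycleStart h)

lemma q'_le_cycleStart {j k : ℕ} (h : j < k) : q' j ≤ cycleStart p' k := by
  obtain ⟨k, rfl⟩ := Nat.exists_eq_add_one_of_ne_zero (Nat.ne_zero_of_lt h)
  exact (K.order_in j).2.1.trans (K.strictMono_p'.monotone (Nat.le_of_lt_succ h))

lemma not_mem_range_of_mem_Ioo (i : ℕ) {m : ℕ} (hm : m ∈ Set.Ioo (cycleStart p' i) (q' i)) :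
    g m ∉ Set.range f := by
  cases i with
  | zero => exact K.gap_zero m hm.1 hm.2
  | succ i => exact K.gap i m hm.1 hm.2

lemma disjoint_segments (i : ℕ) :
    ∀ m ∈ Set.Ioo (cycleStart p' i) (q' i), g m ∉ f '' Set.Icc (cycleStart p i) (q i) :=
  fun _ hm h => K.not_mem_range_of_mem_Ioo i hm (Set.image_subset_range _ _ h)

lemma isDirectedCycle_knitCycle (hf : Function.Injective f) (hg : Function.Injective g)
    (i : ℕ) : IsDirectedCycle (knitCycle f g p q p' q' i) :=
  isDirectedCycle_outSegment_union_inSegment hf hg (K.cycleStart_lt_q i)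
    (K.cycleStart_lt_q' i) (K.f_cycleStart i) (K.f_q i) (K.disjoint_segments i)

lemma verts_knitCycle (i : ℕ) :
    (knitCycle f g p q p' q' i).verts =
      f '' Set.Icc (cycleStart p i) (q i) ∪ g '' Set.Ioo (cycleStart p' i) (q' i) :=
  verts_outSegment_union_inSegment (K.cycleStart_lt_q i).le (K.f_cycleStart i) (K.f_q i)

lemma eq_succ_and_mem_of_mem_verts_knitCycle (hf : Function.Injective f)
    (hg : Function.Injective g) {j k : ℕ} (hjk : j < k) {v : V}
    (hj : v ∈ (knitCycle f g p q p' q' j).verts) (hk : v ∈ (knitCycle f g p q p' q' k).verts) :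
    k = j + 1 ∧ v ∈ f '' Set.Icc (p j) (q j) := by
  rw [K.verts_knitCycle] at hj hk
  rcases hk with ⟨t, ht, rfl⟩ | ⟨m, hm, rfl⟩
  · rcases hj with ⟨s, hs, hst⟩ | ⟨_, hm, hmt⟩
    · obtain rfl := hf hst
      have hkj : k = j + 1 := by
        by_contra hne
        exact absurd ((K.q_lt_cycleStart (by omega)).trans_le ht.1) (not_lt.2 hs.2)
      exact ⟨hkj, s, ⟨K.p_le_cycleStart hjk |>.trans ht.1, hs.2⟩, rfl⟩
    · exact absurd ⟨t, hmt.symm⟩ (K.not_mem_range_of_mem_Ioo j hm)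
  · rcases hj with ⟨s, -, hst⟩ | ⟨m', hm', hmm⟩
    · exact absurd ⟨s, hst⟩ (K.not_mem_range_of_mem_Ioo k hm)
    · obtain rfl := hg hmm
      exact absurd (hm'.2.trans_le (K.q'_le_cycleStart hjk)) (not_lt.2 hm.1.le)

lemma knitCycle_inter_succ (hf : Function.Injective f) (hg : Function.Injective g) (i : ℕ) :
    knitCycle f g p q p' q' i ∩ knitCycle f g p q p' q' (i + 1) = outSegment f (p i) (q i) := by
  have hstart := K.cycleStart_lt_p i
  have hq := K.strictMono_q (Nat.lt_succ_self i)
  refine DGraph.ext (Set.Subset.antisymm ?_ ?_) (Set.Subset.antisymm ?_ ?_)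
  · exact fun v hv =>
      (K.eq_succ_and_mem_of_mem_verts_knitCycle hf hg (Nat.lt_succ_self i) hv.1 hv.2).2
  · rintro _ ⟨t, ht, rfl⟩
    exact ⟨Or.inl ⟨t, ⟨hstart.le.trans ht.1, ht.2⟩, rfl⟩,
      Or.inl ⟨t, ⟨ht.1, ht.2.trans hq.le⟩, rfl⟩⟩
  · rintro e ⟨he, he'⟩
    obtain ⟨-, t, ht, hfst⟩ :=
      K.eq_succ_and_mem_of_mem_verts_knitCycle hf hg (Nat.lt_succ_self i)
      (mem_verts_of_mem_edges_outSegment_union_inSegment he).1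
      (mem_verts_of_mem_edges_outSegment_union_inSegment he').1
    obtain rfl := eq_of_mem_edges_outSegment_union_inSegment hf (K.f_q (i + 1))
      (K.disjoint_segments (i + 1)) he' ht.1 (ht.2.trans_lt hq) hfst.symm
    obtain ⟨-, s, hs, hst⟩ :=
      K.eq_succ_and_mem_of_mem_verts_knitCycle hf hg (Nat.lt_succ_self i)
      (mem_verts_of_mem_edges_outSegment_union_inSegment he).2
      (mem_verts_of_mem_edges_outSegment_union_inSegment he').2
    obtain rfl := hf hst
    exact ⟨t, ⟨ht.1, hs.2⟩, rfl⟩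
  · rintro _ ⟨t, ht, rfl⟩
    exact ⟨Or.inl ⟨t, ⟨hstart.le.trans ht.1, ht.2⟩, rfl⟩,
      Or.inl ⟨t, ⟨ht.1, ht.2.trans hq⟩, rfl⟩⟩

lemma knitCycle_inter_eq_empty (hf : Function.Injective f) (hg : Function.Injective g)
    {j k : ℕ} (hjk : j + 1 < k) :
    knitCycle f g p q p' q' j ∩ knitCycle f g p q p' q' k = ∅ := by
  have hne : ∀ v ∈ (knitCycle f g p q p' q' j).verts,
      v ∉ (knitCycle f g p q p' q' k).verts := fun v hj hk =>
    hjk.ne' (K.eq_succ_and_mem_of_mem_verts_knitCycle hf hg (Nat.lt_of_succ_lt hjk) hj hk).1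
  refine DGraph.ext (Set.eq_empty_of_forall_notMem fun v hv => hne v hv.1 hv.2)
    (Set.eq_empty_of_forall_notMem fun e he => hne e.1 ?_ ?_)
  · exact (mem_verts_of_mem_edges_outSegment_union_inSegment he.1).1
  · exact (mem_verts_of_mem_edges_outSegment_union_inSegment he.2).1

lemma exists_knitCycle_of_outRay_edge (t : ℕ) :
    ∃ i, (f t, f (t + 1)) ∈ (knitCycle f g p q p' q' i).edges := by
  obtain ⟨i, hi⟩ := exists_mem_Ico_of_strictMono (a := cycleStart p) rfl
    (fun i => (K.order_out i).2.1) K.strictMono_q t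
  exact ⟨i, Or.inl ⟨t, hi, rfl⟩⟩

lemma exists_knitCycle_of_inRay_edge (m : ℕ) :
    ∃ i, (g (m + 1), g m) ∈ (knitCycle f g p q p' q' i).edges := by
  obtain ⟨i, hi₁, hi₂⟩ := exists_mem_Ico_of_strictMono (a := cycleStart p') rfl
    (fun _ => le_rfl) K.strictMono_p' m
  change m < p' i at hi₂
  refine ⟨i, ?_⟩
  rcases lt_or_ge m (q' i) with h | h
  · exact Or.inr ⟨m, ⟨hi₁, h⟩, rfl⟩
  · have := K.order_out i; have := K.order_in i; have := K.length_eq i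
    have := K.cycleStart_lt_p i
    refine Or.inl ⟨p i + (p' i - (m + 1)), ⟨by omega, by omega⟩, ?_⟩
    rw [K.g_eq_f i (by omega) hi₂, K.g_eq_f i h hi₂.le]
    exact Prod.ext rfl (congrArg f (by omega))

lemma iUnion_knitCycle : iUnion (knitCycle f g p q p' q') = outRay f ∪ inRay g := by
  refine DGraph.ext (Set.Subset.antisymm ?_ ?_) (Set.Subset.antisymm ?_ ?_)
  · rintro _ ⟨_, ⟨i, rfl⟩, (⟨t, -, rfl⟩ | ⟨m, -, rfl⟩)⟩
    exacts [Or.inl ⟨t, rfl⟩, Or.inr ⟨m, rfl⟩]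
  · rintro _ (⟨t, rfl⟩ | ⟨m, rfl⟩)
    · obtain ⟨i, hi⟩ := K.exists_knitCycle_of_outRay_edge t
      exact Set.mem_iUnion.2 ⟨i, (mem_verts_of_mem_edges_outSegment_union_inSegment hi).1⟩
    · obtain ⟨i, hi⟩ := K.exists_knitCycle_of_inRay_edge m
      exact Set.mem_iUnion.2 ⟨i, (mem_verts_of_mem_edges_outSegment_union_inSegment hi).2⟩
  · rintro _ ⟨_, ⟨i, rfl⟩, (⟨t, -, rfl⟩ | ⟨m, -, rfl⟩)⟩
    exacts [Or.inl ⟨t, rfl⟩, Or.inr ⟨m, rfl⟩]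
  · rintro _ (⟨t, rfl⟩ | ⟨m, rfl⟩)
    · exact Set.mem_iUnion.2 (K.exists_knitCycle_of_outRay_edge t)
    · exact Set.mem_iUnion.2 (K.exists_knitCycle_of_inRay_edge m)

end KnitIndices

end Knit

end DGraph

/-- If `R` is an out-ray and `S` is an in-ray with common
root such that `R` and `S` are knit, then there is a sequence `(C i)` of
directed cycles such that `C j ∩ C k` is a directed path if `|j − k| = 1` and
empty otherwise, and `⋃ᵢ C i = R ∪ S`. -/
theorem knit_rays_decompose_into_cycles {V : Type u} (f g : ℕ → V)
    (hf : Function.Injective f) (hg : Function.Injective g)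
    (h : DGraph.Knit f g) :
    ∃ C : ℕ → DGraph V,
      (∀ i, DGraph.IsDirectedCycle (C i)) ∧
      (∀ j k, j ≠ k →
        ((k = j + 1 ∨ j = k + 1) →
          ∃ m : List V, m ≠ [] ∧ m.Nodup ∧ C j ∩ C k = DGraph.ofList m) ∧
        (¬(k = j + 1 ∨ j = k + 1) → C j ∩ C k = (∅ : DGraph V))) ∧
      DGraph.iUnion C = DGraph.outRay f ∪ DGraph.inRay g := by
  obtain ⟨p, q, p', q', K⟩ := h.exists_knitIndices
  refine ⟨DGraph.knitCycle f g p q p' q', K.isDirectedCycle_knitCycle hf hg,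
    fun j k hjk => ⟨?_, fun hfar => ?_⟩, K.iUnion_knitCycle⟩
  · rintro (rfl | rfl)
    · rw [K.knitCycle_inter_succ hf hg]
      exact DGraph.exists_ofList_eq_outSegment hf (K.order_out j).2.1
    · rw [DGraph.inter_comm, K.knitCycle_inter_succ hf hg]
      exact DGraph.exists_ofList_eq_outSegment hf (K.order_out k).2.1
  · rcases lt_or_gt_of_ne hjk with hlt | hgt
    · exact K.knitCycle_inter_eq_empty hf hg (by omega)
    · rw [DGraph.inter_comm]
      exact K.knitCycle_inter_eq_empty hf hg (by omega)
end

section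
/- Let S be a subdivided star with infinitely many leaves, let D = 𝒟(S), and let D' be a strongly connected butterfly minor of D containing infinitely many teeth (leaves of S). Then D' contains a vertex that has infinite in-degree and infinite out-degree in D'. -/
/-!
Common definitions: directed graphs as vertex/edge sets, directed paths and
walks, rays, arborescences, tree-like models and butterfly minors, laced
paths, knit rays, and the shapes (dominated directed rays, stars, combs,
chains of triangles) from the paper.
-/

universe u

/-!
Let `c` be the centre of the star and `M` the model. A branch set avoiding `c` is connected
in `𝒟(S) - c`, so it lies inside a single branch of the star. Hence an edge of `D'` leaving a
vertex whose branch set lies in branch `n` ends at a vertex whose branch set lies in branch `n`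
too, or at the unique vertex `v₀` whose branch set contains `c`. Two teeth of `D'` lie in
different branches, so a path between them passes through `v₀`. For every tooth `t ≠ v₀`, the
paths from `t` to `v₀` and from `v₀` to `t` give an in- and an out-neighbour of `v₀` in the
branch of `t`; distinct teeth give distinct neighbours.
-/

theorem List.exists_mem_zip_tail_of_head?_of_getLast? {α : Type*} {p : α → Prop} :
    ∀ {l : List α} {a b : α}, l.head? = some a → l.getLast? = some b → p a → ¬ p b →
      ∃ e ∈ l.zip l.tail, p e.1 ∧ ¬ p e.2
  | [], _, _, ha, _, _, _ => by simp at ha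
  | [_], _, _, ha, hb, hpa, hpb => by simp_all
  | x :: y :: l, a, b, ha, hb, hpa, hpb => by
    obtain rfl : x = a := Option.some_injective _ ha
    by_cases hpy : p y
    · obtain ⟨e, he, hpe⟩ :=
        exists_mem_zip_tail_of_head?_of_getLast? (l := y :: l) rfl (by simpa using hb) hpy hpb
      exact ⟨e, List.mem_cons_of_mem _ he, hpe⟩
    · exact ⟨(x, y), List.mem_cons_self, hpa, hpy⟩

theorem Set.Infinite.of_forall_exists_rel {α β : Type*} {R : β → α → Prop}
    (hR : Relator.RightUnique R) {s : Set α} {t : Set β} (hs : s.Infinite)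
    (h : ∀ a ∈ s, ∃ b ∈ t, R b a) : t.Infinite := by
  intro ht
  refine hs ((ht.biUnion fun b _ => Set.Subsingleton.finite (s := {a | R b a}) ?_).subset ?_)
  · exact fun a ha a' ha' => hR ha ha'
  · intro a ha
    obtain ⟨b, hb, hba⟩ := h a ha
    exact Set.mem_biUnion hb hba

namespace DGraph

variable {V : Type u}

theorem Reaches.exists_edge_exit {G : DGraph V} {p : V → Prop} {a b : V} (h : G.Reaches a b)
    (ha : p a) (hb : ¬ p b) :
    ∃ x ∈ G.verts, ∃ y ∈ G.verts, (x, y) ∈ G.edges ∧ p x ∧ ¬ p y := by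
  obtain ⟨l, ⟨-, -, hverts, hedges⟩, hhead, hlast⟩ := h
  obtain ⟨⟨x, y⟩, he, hx, hy⟩ :=
    List.exists_mem_zip_tail_of_head?_of_getLast? hhead hlast ha hb
  have hmem := List.of_mem_zip he
  exact ⟨x, hverts x hmem.1, y, hverts y (List.mem_of_mem_tail hmem.2), hedges _ he, hx, hy⟩

namespace TreeLikeModel

variable {D H : DGraph V} (M : TreeLikeModel D H)

theorem mem_bag_self {u : V} (hu : u ∈ H.verts) : u ∈ (M.bag u).verts := by
  rw [M.bag_eq u hu]
  exact Or.inl (M.tin_arb u hu).1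

theorem eq_of_mem_bag {a b x : V} (ha : a ∈ H.verts) (hb : b ∈ H.verts)
    (hxa : x ∈ (M.bag a).verts) (hxb : x ∈ (M.bag b).verts) : a = b := by
  by_contra hne
  exact (Set.eq_empty_iff_forall_notMem.mp (M.bag_disjoint a ha b hb hne)) x ⟨hxa, hxb⟩

theorem exists_edge_between_bags {a b : V} (ha : a ∈ H.verts) (hb : b ∈ H.verts)
    (hab : (a, b) ∈ H.edges) :
    ∃ x ∈ (M.bag a).verts, ∃ y ∈ (M.bag b).verts, (x, y) ∈ D.edges := by
  refine ⟨_, ?_, _, ?_, M.emap_mem _ hab⟩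
  · rw [M.bag_eq a ha]
    exact Or.inr (M.emap_tail _ hab)
  · rw [M.bag_eq b hb]
    exact Or.inl (M.emap_head _ hab)

end TreeLikeModel

abbrev doubleStar (q : ℕ → List V) : DGraph V := iUnion fun n => doubleOfList (q n)

def BranchesMeetOnlyAt (q : ℕ → List V) (c : V) : Prop :=
  ∀ m n, m ≠ n → ∀ v, v ∈ q m → v ∈ q n → v = c

variable {q : ℕ → List V} {c : V}

theorem exists_mem_of_mem_doubleStar_verts {v : V} (h : v ∈ (doubleStar q).verts) :
    ∃ n, v ∈ q n := by
  obtain ⟨_, ⟨n, rfl⟩, hv⟩ := h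
  exact ⟨n, hv.elim id id⟩

theorem exists_mem_of_mem_doubleStar_edges {x y : V} (h : (x, y) ∈ (doubleStar q).edges) :
    ∃ n, x ∈ q n ∧ y ∈ q n := by
  obtain ⟨_, ⟨n, rfl⟩, h | h⟩ := h
  · have := List.of_mem_zip h
    exact ⟨n, this.1, List.mem_of_mem_tail this.2⟩
  · have := List.of_mem_zip (h : (y, x) ∈ (q n).zip (q n).tail)
    exact ⟨n, List.mem_of_mem_tail this.2, this.1⟩

theorem swap_mem_doubleStar_edges {x y : V} (h : (x, y) ∈ (doubleStar q).edges) :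
    (y, x) ∈ (doubleStar q).edges := by
  obtain ⟨_, ⟨n, rfl⟩, h⟩ := h
  exact ⟨_, ⟨n, rfl⟩, h.symm⟩

namespace BranchesMeetOnlyAt

theorem eq_of_mem (hq : BranchesMeetOnlyAt q c) {x : V} {m n : ℕ} (hm : x ∈ q m)
    (hn : x ∈ q n) (hx : x ≠ c) : m = n := by
  by_contra hmn
  exact hx (hq m n hmn x hm hn)

theorem getLast?_eq (hq : BranchesMeetOnlyAt q c) {x t t' : V} {m n : ℕ} (hm : x ∈ q m)
    (hn : x ∈ q n) (hx : x ≠ c)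
    (ht : (q m).getLast? = some t) (ht' : (q n).getLast? = some t') : t = t' := by
  obtain rfl := hq.eq_of_mem hm hn hx
  exact Option.some_injective _ (ht.symm.trans ht')

theorem mem_of_edge (hq : BranchesMeetOnlyAt q c) {x y : V} {n : ℕ}
    (hxy : (x, y) ∈ (doubleStar q).edges) (hy : y ∈ q n) (hyc : y ≠ c) : x ∈ q n := by
  obtain ⟨m, hxm, hym⟩ := exists_mem_of_mem_doubleStar_edges hxy
  rwa [hq.eq_of_mem hym hy hyc] at hxm

theorem mem_of_reaches (hq : BranchesMeetOnlyAt q c) {T : DGraph V} {u v : V} {n : ℕ}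
    (hT : T.edges ⊆ (doubleStar q).edges) (hc : c ∉ T.verts)
    (h : T.Reaches v u) (hu : u ∈ q n) : v ∈ q n := by
  by_contra hv
  obtain ⟨x, -, y, hy, hxy, hx, hyn⟩ :=
    h.exists_edge_exit (p := fun w => w ∉ q n) hv (not_not.mpr hu)
  exact hx (hq.mem_of_edge (hT hxy) (not_not.mp hyn) (ne_of_mem_of_not_mem hy hc))

end BranchesMeetOnlyAt

namespace TreeLikeModel

variable {H : DGraph V} (M : TreeLikeModel (doubleStar q) H)

theorem bag_subset_branch (hq : BranchesMeetOnlyAt q c) {u : V} {n : ℕ} (hu : u ∈ H.verts)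
    (hun : u ∈ q n) (hc : c ∉ (M.bag u).verts) : ∀ v ∈ (M.bag u).verts, v ∈ q n := by
  intro v hv
  have hsub := M.bag_sub u hu
  rw [M.bag_eq u hu] at hv hc hsub
  rcases hv with hv | hv
  · exact hq.mem_of_reaches (fun e he => hsub.2 (Or.inl he)) (fun h => hc (Or.inl h))
      ((M.tin_arb u hu).2.2.2.2 v hv) hun
  · exact hq.mem_of_reaches (T := (M.tout u).reverse)
      (fun e he => swap_mem_doubleStar_edges (hsub.2 (Or.inr he))) (fun h => hc (Or.inr h))
      ((M.tout_arb u hu).2.2.2.2 v hv) hun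

theorem mem_branch_of_adj (hq : BranchesMeetOnlyAt q c) {a b : V} {n : ℕ} (ha : a ∈ H.verts)
    (hb : b ∈ H.verts) (hadj : (a, b) ∈ H.edges ∨ (b, a) ∈ H.edges) (han : a ∈ q n)
    (hca : c ∉ (M.bag a).verts) (hcb : c ∉ (M.bag b).verts) : b ∈ q n := by
  obtain ⟨x, hx, y, hy, hyx⟩ :
      ∃ x ∈ (M.bag a).verts, ∃ y ∈ (M.bag b).verts, (y, x) ∈ (doubleStar q).edges := by
    rcases hadj with h | h
    · obtain ⟨x, hx, y, hy, hxy⟩ := M.exists_edge_between_bags ha hb h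
      exact ⟨x, hx, y, hy, swap_mem_doubleStar_edges hxy⟩
    · obtain ⟨y, hy, x, hx, hyx⟩ := M.exists_edge_between_bags hb ha h
      exact ⟨x, hx, y, hy, hyx⟩
  have hyn : y ∈ q n :=
    hq.mem_of_edge hyx (M.bag_subset_branch hq ha han hca x hx) (ne_of_mem_of_not_mem hx hca)
  obtain ⟨k, hbk⟩ :=
    exists_mem_of_mem_doubleStar_verts ((M.bag_sub b hb).1 (M.mem_bag_self hb))
  have hyk := M.bag_subset_branch hq hb hbk hcb y hy
  rwa [hq.eq_of_mem hyk hyn (ne_of_mem_of_not_mem hy hcb)] at hbk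

theorem exists_edge_into_centre_bag (hq : BranchesMeetOnlyAt q c) {a b : V} {n : ℕ}
    (h : H.Reaches a b) (han : a ∈ q n) (hca : c ∉ (M.bag a).verts)
    (hb : ¬ (b ∈ q n ∧ c ∉ (M.bag b).verts)) :
    ∃ x y, (x, y) ∈ H.edges ∧ x ∈ q n ∧ x ≠ c ∧ y ∈ H.verts ∧ c ∈ (M.bag y).verts := by
  obtain ⟨x, hx, y, hy, hxy, ⟨hxn, hcx⟩, hyn⟩ :=
    h.exists_edge_exit (p := fun w => w ∈ q n ∧ c ∉ (M.bag w).verts) ⟨han, hca⟩ hb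
  refine ⟨x, y, hxy, hxn, ne_of_mem_of_not_mem (M.mem_bag_self hx) hcx, hy, ?_⟩
  by_contra hcy
  exact hyn ⟨M.mem_branch_of_adj hq hx hy (Or.inl hxy) hxn hcx hcy, hcy⟩

theorem exists_edge_out_of_centre_bag (hq : BranchesMeetOnlyAt q c) {a b : V} {n : ℕ}
    (h : H.Reaches b a) (han : a ∈ q n) (hca : c ∉ (M.bag a).verts)
    (hb : ¬ (b ∈ q n ∧ c ∉ (M.bag b).verts)) :
    ∃ x y, (y, x) ∈ H.edges ∧ x ∈ q n ∧ x ≠ c ∧ y ∈ H.verts ∧ c ∈ (M.bag y).verts := by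
  obtain ⟨y, hy, x, hx, hyx, hyn, hx'⟩ :=
    h.exists_edge_exit (p := fun w => ¬ (w ∈ q n ∧ c ∉ (M.bag w).verts)) hb
      (not_not.mpr ⟨han, hca⟩)
  obtain ⟨hxn, hcx⟩ := not_not.mp hx'
  refine ⟨x, y, hyx, hxn, ne_of_mem_of_not_mem (M.mem_bag_self hx) hcx, hy, ?_⟩
  by_contra hcy
  exact hyn ⟨M.mem_branch_of_adj hq hx hy (Or.inr hyx) hxn hcx hcy, hcy⟩

theorem exists_mem_centre_bag (hq : BranchesMeetOnlyAt q c) (hsc : H.StronglyConnected)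
    (hteeth : (H.verts ∩ {v | ∃ n, (q n).getLast? = some v}).Nontrivial) :
    ∃ v ∈ H.verts, c ∈ (M.bag v).verts := by
  obtain ⟨t₁, ⟨ht₁, n₁, hn₁⟩, t₂, ⟨ht₂, n₂, hn₂⟩, hne⟩ := hteeth
  by_contra! hno
  obtain ⟨-, y, -, -, -, hy, hcy⟩ := M.exists_edge_into_centre_bag hq (hsc t₁ ht₁ t₂ ht₂)
    (List.mem_of_getLast? hn₁) (hno t₁ ht₁) fun ⟨h₂, hc₂⟩ =>
      hne (hq.getLast?_eq h₂ (List.mem_of_getLast? hn₂)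
        (ne_of_mem_of_not_mem (M.mem_bag_self ht₂) hc₂) hn₁ hn₂)
  exact hno y hy hcy

end TreeLikeModel

end DGraph

/-- Let `S` be a subdivided star with infinitely many
leaves, let `D = 𝒟(S)`, and let `D'` be a strongly connected butterfly minor
of `D` containing infinitely many teeth (leaves of `S`).  Then `D'` contains
a vertex that has infinite in-degree and infinite out-degree in `D'`. -/
theorem star_minor_has_infinite_degree_vertex {V : Type u} (D D' : DGraph V)
    (teeth : Set V) (hD : DGraph.IsDSubdividedStar D teeth)
    (hm : D.IsButterflyMinor D') (hsc : D'.StronglyConnected)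
    (hteeth : (D'.verts ∩ teeth).Infinite) :
    ∃ v ∈ D'.verts, {u | (u, v) ∈ D'.edges}.Infinite ∧
      {u | (v, u) ∈ D'.edges}.Infinite := by
  obtain ⟨c, q, -, hq : DGraph.BranchesMeetOnlyAt q c, rfl, rfl⟩ := hD
  obtain ⟨M⟩ := hm
  obtain ⟨v₀, hv₀, hcv₀⟩ := M.exists_mem_centre_bag hq hsc hteeth.nontrivial
  have hoff : ∀ t ∈ D'.verts, t ≠ v₀ → c ∉ (M.bag t).verts :=
    fun t ht hne hct => hne (M.eq_of_mem_bag ht hv₀ hct hcv₀)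
  have hR : Relator.RightUnique fun x t : V => ∃ n, x ∈ q n ∧ x ≠ c ∧ (q n).getLast? = some t :=
    fun x _ _ ⟨_, hxm, hxc, ht⟩ ⟨_, hxn, _, ht'⟩ => hq.getLast?_eq hxm hxn hxc ht ht'
  have hT := hteeth.sdiff (Set.finite_singleton v₀)
  refine ⟨v₀, hv₀, hT.of_forall_exists_rel hR ?_, hT.of_forall_exists_rel hR ?_⟩
  · rintro t ⟨⟨ht, n, hn⟩, hne⟩
    obtain ⟨x, y, hxy, hxn, hxc, hy, hcy⟩ :=
      M.exists_edge_into_centre_bag hq (hsc t ht v₀ hv₀) (List.mem_of_getLast? hn)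
        (hoff t ht hne) fun h => h.2 hcv₀
    obtain rfl := M.eq_of_mem_bag hy hv₀ hcy hcv₀
    exact ⟨x, hxy, n, hxn, hxc, hn⟩
  · rintro t ⟨⟨ht, n, hn⟩, hne⟩
    obtain ⟨x, y, hyx, hxn, hxc, hy, hcy⟩ :=
      M.exists_edge_out_of_centre_bag hq (hsc v₀ hv₀ t ht) (List.mem_of_getLast? hn)
        (hoff t ht hne) fun h => h.2 hcv₀
    obtain rfl := M.eq_of_mem_bag hy hv₀ hcy hcv₀
    exact ⟨x, hyx, n, hxn, hxc, hn⟩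
end
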